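/- arXiv:1908.08319 — 6 statements merged into one kernel-verified Lean document; each statement's English description precedes it below -/
import Mathlib

section
/- Let α ∈ (0,1) and φ ∈ L^∞([a,b], ℝⁿ). Define (R^α_{a+} φ)(t) = ((1−α) sin(απ)/π) ∫_a^t K(t−a, τ−a) φ(τ) dτ, where K is the kernel K(ξ,τ) = τ^{α−1} ∫_0^1 η^α/((1−η)^α (τ+η(ξ−τ))^α) dη. Then (R^α_{a+}φ)(t) is well defined for every t ∈ [a,b], the function R^α_{a+}φ is measurable, and ‖(R^α_{a+}φ)(t)‖ ≤ (sin(απ)/(απ)) · ess sup_{τ∈[a,t]} ‖φ(τ)‖ for all t ∈ [a,b]. -/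
/-!
Since `η / (τ + η (ξ - τ)) ≤ 1 / ξ`, the inner integrand of the kernel is at most
`((1 - η) ξ)^(-α)`, whence `K(ξ, τ) ≤ ξ^(-α) τ^(α-1) / (1 - α)`. Against an essential bound `M`
of `‖φ‖` on `[a, t]` this majorant integrates to `M / (α (1 - α))`, which gives integrability and,
after multiplying by `(1 - α) sin(απ) / π`, the bound `sin(απ) / (απ) · M`. Measurability in `t`
follows by writing the integral over `(a, t]` as the integral of an indicator of a measurable
subset of the plane and applying Fubini's measurability lemma.
-/

open MeasureTheory Set Real

/-- The kernel `K(ξ,τ) = (1/τ^{1-α}) ∫_0^1 η^α/((1-η)^α (τ+η(ξ-τ))^α) dη`. -/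
noncomputable def kernelK (α ξ τ : ℝ) : ℝ :=
  (1 / τ ^ (1 - α)) *
    ∫ η in (0 : ℝ)..1, η ^ α / ((1 - η) ^ α * (τ + η * (ξ - τ)) ^ α)

section Kernel

variable {α ξ τ η : ℝ}

lemma kernelK_integrand_nonneg (hξ : 0 ≤ ξ) (hτ : 0 ≤ τ) (hη : η ∈ Icc (0 : ℝ) 1) :
    0 ≤ η ^ α / ((1 - η) ^ α * (τ + η * (ξ - τ)) ^ α) := by
  obtain ⟨hη0, hη1⟩ := hη
  have hc : 0 ≤ τ + η * (ξ - τ) := by nlinarith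
  have h1η : 0 ≤ 1 - η := by linarith
  positivity

lemma kernelK_integrand_le (hα : 0 ≤ α) (hτ : 0 < τ) (hτξ : τ ≤ ξ)
    (hη : η ∈ Ioo (0 : ℝ) 1) :
    η ^ α / ((1 - η) ^ α * (τ + η * (ξ - τ)) ^ α) ≤ (1 - η) ^ (-α) * ξ ^ (-α) := by
  obtain ⟨hη0, hη1⟩ := hη
  have h1η : 0 < 1 - η := by linarith
  have hc : 0 < τ + η * (ξ - τ) := by nlinarith
  have hξ : 0 < ξ := hτ.trans_le hτξ
  rw [← mul_rpow h1η.le hc.le, ← div_rpow hη0.le (by positivity), ← mul_rpow h1η.le hξ.le,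
    rpow_neg (by positivity), ← inv_rpow (by positivity)]
  refine rpow_le_rpow (by positivity) ?_ hα
  rw [← one_div, div_le_div_iff₀ (by positivity) (by positivity)]
  nlinarith [mul_nonneg (mul_nonneg h1η.le h1η.le) hτ.le]

lemma intervalIntegrable_one_sub_rpow {r : ℝ} (hr : -1 < r) :
    IntervalIntegrable (fun η : ℝ => (1 - η) ^ r) volume 0 1 := by
  simpa using
    ((intervalIntegral.intervalIntegrable_rpow' (a := 0) (b := 1) hr).comp_sub_left 1).symm

lemma integral_one_sub_rpow {r : ℝ} (hr : -1 < r) :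
    ∫ η in (0 : ℝ)..1, (1 - η) ^ r = 1 / (r + 1) := by
  rw [intervalIntegral.integral_comp_sub_left (fun x => x ^ r), sub_self, sub_zero,
    integral_rpow (Or.inl hr), one_rpow, zero_rpow (by linarith)]
  ring

lemma kernelK_nonneg (hξ : 0 ≤ ξ) (hτ : 0 ≤ τ) : 0 ≤ kernelK α ξ τ :=
  mul_nonneg (by positivity) <| intervalIntegral.integral_nonneg zero_le_one
    fun _ hη => kernelK_integrand_nonneg hξ hτ hη

lemma kernelK_le (hα : α ∈ Ioo (0 : ℝ) 1) (hτ : 0 < τ) (hτξ : τ ≤ ξ) :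
    kernelK α ξ τ ≤ ξ ^ (-α) / (1 - α) * τ ^ (α - 1) := by
  have hinner : ∫ η in (0 : ℝ)..1, η ^ α / ((1 - η) ^ α * (τ + η * (ξ - τ)) ^ α)
      ≤ ξ ^ (-α) / (1 - α) := by
    calc _ ≤ ∫ η in (0 : ℝ)..1, (1 - η) ^ (-α) * ξ ^ (-α) := by
          simp only [intervalIntegral.integral_of_le zero_le_one]
          refine integral_mono_of_nonneg ?_ ((intervalIntegrable_one_sub_rpow
            (by linarith [hα.2])).mul_const _).1 ?_ <;>
            rw [← Measure.restrict_congr_set Ioo_ae_eq_Ioc] <;>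
            filter_upwards [ae_restrict_mem measurableSet_Ioo] with η hη
          · exact kernelK_integrand_nonneg (hτ.le.trans hτξ) hτ.le (Ioo_subset_Icc_self hη)
          · exact kernelK_integrand_le hα.1.le hτ hτξ hη
      _ = ξ ^ (-α) / (1 - α) := by
          rw [intervalIntegral.integral_mul_const, integral_one_sub_rpow (by linarith [hα.2])]
          ring
  have hτpow : 1 / τ ^ (1 - α) = τ ^ (α - 1) := by
    rw [one_div, ← rpow_neg hτ.le, neg_sub]
  rw [kernelK, hτpow, mul_comm]
  exact mul_le_mul_of_nonneg_right hinner (by positivity)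

lemma measurable_kernelK (α : ℝ) : Measurable fun p : ℝ × ℝ => kernelK α p.1 p.2 := by
  simp only [kernelK, intervalIntegral.integral_of_le zero_le_one]
  refine Measurable.mul (by fun_prop) ?_
  refine StronglyMeasurable.measurable <| StronglyMeasurable.integral_prod_right'
    (f := fun q : (ℝ × ℝ) × ℝ =>
      q.2 ^ α / ((1 - q.2) ^ α * (q.1.2 + q.2 * (q.1.1 - q.1.2)) ^ α))
    (Measurable.stronglyMeasurable (by fun_prop))

end Kernel

lemma intervalIntegrable_sub_rpow {a t r : ℝ} (hr : -1 < r) :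
    IntervalIntegrable (fun τ : ℝ => (τ - a) ^ r) volume a t := by
  simpa using
    (intervalIntegral.intervalIntegrable_rpow' (a := 0) (b := t - a) hr).comp_sub_right a

lemma integral_sub_rpow {a t r : ℝ} (hr : -1 < r) :
    ∫ τ in a..t, (τ - a) ^ r = (t - a) ^ (r + 1) / (r + 1) := by
  rw [intervalIntegral.integral_comp_sub_right (fun x => x ^ r), sub_self,
    integral_rpow (Or.inl hr), zero_rpow (by linarith), sub_zero]

theorem MeasureTheory.StronglyMeasurable.intervalIntegral_param_upper {E : Type*}
    [NormedAddCommGroup E] [NormedSpace ℝ E] {F : ℝ → ℝ → E}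
    (hF : StronglyMeasurable (Function.uncurry F)) (a : ℝ) :
    StronglyMeasurable fun t => ∫ τ in a..t, F t τ := by
  have hpiece : ∀ s : Set (ℝ × ℝ), MeasurableSet s →
      StronglyMeasurable fun t => ∫ τ, s.indicator (Function.uncurry F) (t, τ) :=
    fun s hs => (hF.indicator hs).integral_prod_right'
  have hs₁ : MeasurableSet {p : ℝ × ℝ | p.2 ∈ Ioc a p.1} :=
    (_root_.measurableSet_lt measurable_const measurable_snd).inter
      (_root_.measurableSet_le measurable_snd measurable_fst)
  have hs₂ : MeasurableSet {p : ℝ × ℝ | p.2 ∈ Ioc p.1 a} :=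
    (_root_.measurableSet_lt measurable_fst measurable_snd).inter
      (_root_.measurableSet_le measurable_snd measurable_const)
  convert (hpiece _ hs₁).sub (hpiece _ hs₂) using 2 with t
  simp only [intervalIntegral, ← integral_indicator measurableSet_Ioc]
  rfl

section Operator

variable {E : Type*} [NormedAddCommGroup E] [NormedSpace ℝ E] {α a t M : ℝ} {f : ℝ → E}

lemma ae_norm_kernelK_smul_le (hα : α ∈ Ioo (0 : ℝ) 1)
    (hf : ∀ᵐ τ ∂volume.restrict (Ioc a t), ‖f τ‖ ≤ M) :
    ∀ᵐ τ ∂volume.restrict (Ioc a t), ‖kernelK α (t - a) (τ - a) • f τ‖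
      ≤ (t - a) ^ (-α) / (1 - α) * M * (τ - a) ^ (α - 1) := by
  filter_upwards [hf, ae_restrict_mem measurableSet_Ioc] with τ hτM ⟨hτa, hτt⟩
  have hτ : 0 < τ - a := by linarith
  have hξ : 0 ≤ t - a := by linarith
  rw [norm_smul, norm_of_nonneg (kernelK_nonneg (by linarith) hτ.le)]
  calc kernelK α (t - a) (τ - a) * ‖f τ‖
      ≤ (t - a) ^ (-α) / (1 - α) * (τ - a) ^ (α - 1) * M :=
        mul_le_mul (kernelK_le hα hτ (by linarith)) hτM (norm_nonneg _)
          (mul_nonneg (div_nonneg (rpow_nonneg hξ _) (by linarith [hα.2])) (rpow_nonneg hτ.le _))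
    _ = (t - a) ^ (-α) / (1 - α) * M * (τ - a) ^ (α - 1) := by ring

lemma intervalIntegrable_kernelK_smul (hα : α ∈ Ioo (0 : ℝ) 1) (hat : a ≤ t)
    (hfm : AEStronglyMeasurable f (volume.restrict (Ioc a t)))
    (hf : ∀ᵐ τ ∂volume.restrict (Ioc a t), ‖f τ‖ ≤ M) :
    IntervalIntegrable (fun τ => kernelK α (t - a) (τ - a) • f τ) volume a t := by
  have hKm : Measurable fun τ => kernelK α (t - a) (τ - a) :=
    (measurable_kernelK α).comp (measurable_const.prodMk (measurable_id.sub_const a))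
  refine (((intervalIntegrable_sub_rpow (r := α - 1) (by linarith [hα.1])).const_mul
    ((t - a) ^ (-α) / (1 - α) * M))).mono_fun' ?_ ?_ <;> rw [uIoc_of_le hat]
  · exact hKm.aestronglyMeasurable.smul hfm
  · exact ae_norm_kernelK_smul_le hα hf

lemma norm_integral_kernelK_smul_le (hα : α ∈ Ioo (0 : ℝ) 1) (hat : a ≤ t) (hM : 0 ≤ M)
    (hf : ∀ᵐ τ ∂volume.restrict (Ioc a t), ‖f τ‖ ≤ M) :
    ‖∫ τ in a..t, kernelK α (t - a) (τ - a) • f τ‖ ≤ M / (α * (1 - α)) := by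
  have hξ : 0 ≤ t - a := by linarith
  calc ‖∫ τ in a..t, kernelK α (t - a) (τ - a) • f τ‖
      ≤ ∫ τ in a..t, (t - a) ^ (-α) / (1 - α) * M * (τ - a) ^ (α - 1) :=
        intervalIntegral.norm_integral_le_of_norm_le hat
          ((ae_restrict_iff' measurableSet_Ioc).1 (ae_norm_kernelK_smul_le hα hf))
          ((intervalIntegrable_sub_rpow (r := α - 1) (by linarith [hα.1])).const_mul _)
    _ = ((t - a) ^ α)⁻¹ * (t - a) ^ α * (M / (α * (1 - α))) := by
        rw [intervalIntegral.integral_const_mul, integral_sub_rpow (by linarith [hα.1]),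
          rpow_neg hξ, sub_add_cancel]
        have := hα.1; have := hα.2
        field_simp
    _ ≤ M / (α * (1 - α)) := by
        -- the first factor is `0` rather than `1` when `t = a`
        have := hα.1; have := hα.2
        exact mul_le_of_le_one_left (by positivity) (inv_mul_le_one_of_le₀ le_rfl (by positivity))

lemma stronglyMeasurable_intervalIntegral_kernelK_smul (hf : StronglyMeasurable f) :
    StronglyMeasurable fun t => ∫ τ in a..t, kernelK α (t - a) (τ - a) • f τ :=
  StronglyMeasurable.intervalIntegral_param_upper (F := fun t τ => kernelK α (t - a) (τ - a) • f τ)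
    ((((measurable_kernelK α).comp ((measurable_fst.sub_const a).prodMk
      (measurable_snd.sub_const a))).stronglyMeasurable).smul
        (hf.comp_measurable measurable_snd)) a

end Operator

theorem operator_R_properties_general
    (n : ℕ) (a b : ℝ) (α : ℝ) (hα : α ∈ Set.Ioo (0 : ℝ) 1)
    (φ : ℝ → EuclideanSpace ℝ (Fin n)) (hφm : Measurable φ)
    (hφb : eLpNorm φ ⊤ (volume.restrict (Set.Icc a b)) < ⊤) :
    (∀ t ∈ Set.Icc a b,
      IntervalIntegrable (fun τ => kernelK α (t - a) (τ - a) • φ τ) volume a t) ∧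
    Measurable (fun t =>
      ((1 - α) * Real.sin (α * π) / π) • ∫ τ in a..t, kernelK α (t - a) (τ - a) • φ τ) ∧
    ∀ t ∈ Set.Icc a b,
      ‖((1 - α) * Real.sin (α * π) / π) • ∫ τ in a..t, kernelK α (t - a) (τ - a) • φ τ‖
        ≤ (Real.sin (α * π) / (α * π))
            * essSup (fun τ => (‖φ τ‖ : ℝ)) (volume.restrict (Set.Icc a t)) := by
  have hφt : ∀ t ∈ Icc a b, MemLp φ ⊤ (volume.restrict (Icc a t)) := fun t ht =>
    MemLp.mono_measure (Measure.restrict_mono (Icc_subset_Icc_right ht.2) le_rfl)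
      ⟨hφm.aestronglyMeasurable, hφb⟩
  have hbound : ∀ t ∈ Icc a b, ∀ᵐ τ ∂volume.restrict (Ioc a t),
      ‖φ τ‖ ≤ essSup (‖φ ·‖) (volume.restrict (Icc a t)) := fun t ht =>
    ae_restrict_of_ae_restrict_of_subset Ioc_subset_Icc_self
      (lpNorm_exponent_top_eq_essSup (hφt t ht) ▸ ae_le_lpNorm_exponent_top (hφt t ht))
  refine ⟨fun t ht => intervalIntegrable_kernelK_smul hα ht.1 hφm.aestronglyMeasurable
    (hbound t ht), ?_, fun t ht => ?_⟩
  · exact (stronglyMeasurable_intervalIntegral_kernelK_smul (α := α) (a := a)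
      hφm.stronglyMeasurable).measurable.const_smul ((1 - α) * sin (α * π) / π)
  have hM : 0 ≤ essSup (‖φ ·‖) (volume.restrict (Icc a t)) :=
    lpNorm_exponent_top_eq_essSup (hφt t ht) ▸ lpNorm_nonneg
  set M := essSup (‖φ ·‖) (volume.restrict (Icc a t))
  set I := ∫ τ in a..t, kernelK α (t - a) (τ - a) • φ τ
  have hsin : 0 < sin (α * π) :=
    sin_pos_of_pos_of_lt_pi (by nlinarith [hα.1, pi_pos]) (by nlinarith [hα.2, pi_pos])
  have := hα.1; have := hα.2
  calc ‖((1 - α) * sin (α * π) / π) • I‖ = (1 - α) * sin (α * π) / π * ‖I‖ := by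
        rw [norm_smul, norm_of_nonneg (by positivity)]
    _ ≤ (1 - α) * sin (α * π) / π * (M / (α * (1 - α))) := by
        gcongr
        exact norm_integral_kernelK_smul_le hα ht.1 hM (hbound t ht)
    _ = sin (α * π) / (α * π) * M := by field_simp

/-- Properties of the operator
`(R^α_{a+} φ)(t) = ((1-α) sin(απ)/π) ∫_a^t K(t-a, τ-a) φ(τ) dτ`:
well-definedness, measurability, and the bound
`‖(R^α_{a+}φ)(t)‖ ≤ (sin(απ)/(απ)) · ess sup_{[a,t]} ‖φ‖`. -/
theorem operator_R_properties
    (n : ℕ) (a b : ℝ) (hab : a ≤ b) (α : ℝ) (hα : α ∈ Set.Ioo (0 : ℝ) 1)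
    (φ : ℝ → EuclideanSpace ℝ (Fin n)) (hφm : Measurable φ)
    (hφb : eLpNorm φ ⊤ (volume.restrict (Set.Icc a b)) < ⊤) :
    (∀ t ∈ Set.Icc a b,
      IntervalIntegrable (fun τ => kernelK α (t - a) (τ - a) • φ τ) volume a t) ∧
    Measurable (fun t =>
      ((1 - α) * Real.sin (α * π) / π) • ∫ τ in a..t, kernelK α (t - a) (τ - a) • φ τ) ∧
    ∀ t ∈ Set.Icc a b,
      ‖((1 - α) * Real.sin (α * π) / π) • ∫ τ in a..t, kernelK α (t - a) (τ - a) • φ τ‖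
        ≤ (Real.sin (α * π) / (α * π))
            * essSup (fun τ => (‖φ τ‖ : ℝ)) (volume.restrict (Set.Icc a t)) :=
  operator_R_properties_general n a b α hα φ hφm hφb
end

section
/- Let α ∈ (0,1) and φ ∈ L^∞([a,b], ℝⁿ), and let (J^α_{a+} φ)(t) = ((t−a)^{1−α}/Γ(α)) ∫_a^t φ(τ) / ((t−τ)^{1−α} (τ−a)^{1−α}) dτ. Then J^α_{a+}φ satisfies the Hölder estimate ‖(J^α_{a+}φ)(t₁) − (J^α_{a+}φ)(t₂)‖ ≤ (2/Γ(α+1)) (1 + sin(απ)/(απ)) · ‖φ‖_∞ · |t₁ − t₂|^α for all t₁, t₂ ∈ [a,b]; in particular J^α_{a+}φ is continuous on [a,b]. -/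
/-!
For `t₂ ≤ t₁` put `K_t(τ) = (t - a)^(1-α) (t - τ)^(α-1) (τ - a)^(α-1)`. Splitting `∫_a^{t₁}`
at `t₂` gives `Γ(α) (J t₁ - J t₂) = ∫_{t₂}^{t₁} K_{t₁} φ - ∫_a^{t₂} (K_{t₂} - K_{t₁}) φ`, and
`K_t(τ)` decreases in `t`, so
`Γ(α) ‖J t₁ - J t₂‖ ≤ ‖φ‖_∞ (∫_a^{t₂} K_{t₂} - ∫_a^{t₁} K_{t₁} + 2 ∫_{t₂}^{t₁} K_{t₁})`.
With `w(s) = s^(α-1) (1-s)^(α-1)` (that is, `kernel α 0 1`), `B = ∫₀¹ w` and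
`σ = (t₂ - a)/(t₁ - a)`, the substitution `τ = a + (t₁ - a) s` turns the bracket into
`(t₁ - a)^α (B σ^α - B + 2 ∫_σ^1 w)`, so it remains to prove
`2α ∫_σ^1 w ≤ αB (1 - σ^α) + 2 (1 - σ)^α`. The difference of the two sides is `α ∫_σ^1 w r` with
`r(s) = 2 - αB (1-s)^(1-α) - 2 s^(1-α)`. As `r` is convex with `r 1 = 0`, `w r` changes sign at
most once on `(0, 1)`, from positive to negative, and `∫₀¹ w r = B - 2/α ≤ 0` because
`w(s) ≤ s^(α-1) + (1-s)^(α-1)`; hence `∫_σ^1 w r ≤ 0` for every `σ`. This yields the Hölder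
constant `2 / Γ(α + 1)`.
-/

open MeasureTheory Set Real
open scoped Interval

noncomputable section

lemma continuousOn_of_norm_sub_le_rpow {E : Type*} [NormedAddCommGroup E] {f : ℝ → E}
    {s : Set ℝ} {C r : ℝ} (hr : 0 < r) (h : ∀ x ∈ s, ∀ y ∈ s, ‖f x - f y‖ ≤ C * |x - y| ^ r) :
    ContinuousOn f s := by
  intro y hy
  rw [ContinuousWithinAt, tendsto_iff_norm_sub_tendsto_zero]
  have hcont : Continuous fun x => C * |x - y| ^ r := by
    have := continuous_rpow_const hr.le
    fun_prop
  refine squeeze_zero' (Filter.Eventually.of_forall fun _ => norm_nonneg _)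
    (eventually_nhdsWithin_of_forall fun x hx => h x hx y hy) ?_
  simpa [zero_rpow hr.ne'] using hcont.continuousWithinAt.tendsto (s := s) (x := y)

lemma ae_restrict_uIoc_mem_Ioo {a b : ℝ} (hab : a ≤ b) :
    ∀ᵐ x ∂volume.restrict (Ι a b), x ∈ Ioo a b := by
  rw [uIoc_of_le hab, ← Measure.restrict_congr_set Ioo_ae_eq_Ioc]
  exact ae_restrict_mem measurableSet_Ioo

lemma intervalIntegral.integral_nonpos_of_single_crossing {g : ℝ → ℝ} {a b σ : ℝ}
    (hσ : σ ∈ Icc a b) (hg : IntervalIntegrable g volume a b) (htotal : ∫ s in a..b, g s ≤ 0)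
    (hsign : (∀ s ∈ Ioo σ b, g s ≤ 0) ∨ ∀ s ∈ Ioo a σ, 0 ≤ g s) :
    ∫ s in σ..b, g s ≤ 0 := by
  have hgσb : IntervalIntegrable g volume σ b :=
    hg.mono_set (uIcc_subset_uIcc (by simpa [uIcc_of_le (hσ.1.trans hσ.2)] using hσ) right_mem_uIcc)
  have hgaσ : IntervalIntegrable g volume a σ :=
    hg.mono_set (uIcc_subset_uIcc left_mem_uIcc (by simpa [uIcc_of_le (hσ.1.trans hσ.2)] using hσ))
  rcases hsign with hneg | hpos
  · simpa using integral_mono_on_of_le_Ioo hσ.2 hgσb intervalIntegrable_const hneg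
  · have := integral_mono_on_of_le_Ioo hσ.1 intervalIntegrable_const hgaσ hpos
    rw [integral_zero] at this
    linarith [integral_add_adjacent_intervals hgaσ hgσb]

section

variable {E : Type*} [NormedAddCommGroup E] [NormedSpace ℝ E] {K K₁ K₂ : ℝ → ℝ} {φ : ℝ → E}
  {a c d t₁ t₂ M : ℝ}

lemma IntervalIntegrable.smul_of_ae_norm_le (hK : IntervalIntegrable K volume c d) (hcd : c ≤ d)
    (hφ : AEStronglyMeasurable φ (volume.restrict (Icc c d)))
    (hM : ∀ᵐ τ ∂volume.restrict (Icc c d), ‖φ τ‖ ≤ M) :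
    IntervalIntegrable (fun τ => K τ • φ τ) volume c d := by
  rw [intervalIntegrable_iff_integrableOn_Icc_of_le hcd] at hK ⊢
  exact hK.smul_of_top_left (memLp_top_of_bound hφ M hM)

lemma norm_integral_smul_le (hcd : c ≤ d) (hK : IntervalIntegrable K volume c d)
    (hK0 : ∀ τ ∈ Ioo c d, 0 ≤ K τ) (hM : ∀ᵐ τ ∂volume.restrict (Icc c d), ‖φ τ‖ ≤ M) :
    ‖∫ τ in c..d, K τ • φ τ‖ ≤ M * ∫ τ in c..d, K τ := by
  rw [← intervalIntegral.integral_const_mul]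
  refine intervalIntegral.norm_integral_le_of_norm_le hcd ?_ (hK.const_mul M)
  filter_upwards [(ae_restrict_iff' measurableSet_Icc).1 hM, Measure.ae_ne volume d]
    with τ hφτ hτd hτ
  have hKτ := hK0 τ ⟨hτ.1, hτ.2.lt_of_ne hτd⟩
  rw [norm_smul, norm_of_nonneg hKτ, mul_comm]
  exact mul_le_mul_of_nonneg_right (hφτ (Ioc_subset_Icc_self hτ)) hKτ

lemma norm_integral_smul_sub_integral_smul_le (ht₂ : a ≤ t₂) (h21 : t₂ ≤ t₁)
    (hK₁ : IntervalIntegrable K₁ volume a t₁) (hK₂ : IntervalIntegrable K₂ volume a t₂)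
    (hK₁0 : ∀ τ ∈ Ioo t₂ t₁, 0 ≤ K₁ τ) (hK₁₂ : ∀ τ ∈ Ioo a t₂, K₁ τ ≤ K₂ τ)
    (hφ : AEStronglyMeasurable φ (volume.restrict (Icc a t₁)))
    (hM : ∀ᵐ τ ∂volume.restrict (Icc a t₁), ‖φ τ‖ ≤ M) :
    ‖(∫ τ in a..t₁, K₁ τ • φ τ) - ∫ τ in a..t₂, K₂ τ • φ τ‖
      ≤ M * ((∫ τ in a..t₂, K₂ τ) - (∫ τ in a..t₁, K₁ τ) + 2 * ∫ τ in t₂..t₁, K₁ τ) := by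
  have hsub₁ : Icc a t₂ ⊆ Icc a t₁ := Icc_subset_Icc_right h21
  have hsub₂ : Icc t₂ t₁ ⊆ Icc a t₁ := Icc_subset_Icc_left ht₂
  have hK₁a : IntervalIntegrable K₁ volume a t₂ :=
    hK₁.mono_set (by simpa [uIcc_of_le ht₂, uIcc_of_le (ht₂.trans h21)] using hsub₁)
  have hK₁b : IntervalIntegrable K₁ volume t₂ t₁ :=
    hK₁.mono_set (by simpa [uIcc_of_le h21, uIcc_of_le (ht₂.trans h21)] using hsub₂)
  have hMa := ae_restrict_of_ae_restrict_of_subset hsub₁ hM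
  have hMb := ae_restrict_of_ae_restrict_of_subset hsub₂ hM
  have hK₁φa := hK₁a.smul_of_ae_norm_le ht₂ (hφ.mono_set hsub₁) hMa
  have hK₁φb := hK₁b.smul_of_ae_norm_le h21 (hφ.mono_set hsub₂) hMb
  have hK₂φ := hK₂.smul_of_ae_norm_le ht₂ (hφ.mono_set hsub₁) hMa
  have hsplit : (∫ τ in a..t₁, K₁ τ • φ τ) - ∫ τ in a..t₂, K₂ τ • φ τ
      = (∫ τ in t₂..t₁, K₁ τ • φ τ) - ∫ τ in a..t₂, (K₂ τ - K₁ τ) • φ τ := by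
    simp only [sub_smul]
    rw [← intervalIntegral.integral_add_adjacent_intervals hK₁φa hK₁φb,
      intervalIntegral.integral_sub hK₂φ hK₁φa]
    abel
  have hdiff := norm_integral_smul_le ht₂ (hK₂.sub hK₁a)
    (fun τ hτ => sub_nonneg.2 (hK₁₂ τ hτ)) hMa
  have htail := norm_integral_smul_le h21 hK₁b hK₁0 hMb
  rw [intervalIntegral.integral_sub hK₂ hK₁a] at hdiff
  rw [hsplit, ← intervalIntegral.integral_add_adjacent_intervals hK₁a hK₁b]
  linarith [norm_sub_le (∫ τ in t₂..t₁, K₁ τ • φ τ) (∫ τ in a..t₂, (K₂ τ - K₁ τ) • φ τ)]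

end

namespace OperatorJ

def kernel (α a t τ : ℝ) : ℝ := (t - τ) ^ (α - 1) * (τ - a) ^ (α - 1)

def scaledKernel (α a t τ : ℝ) : ℝ := (t - a) ^ (1 - α) * kernel α a t τ

variable {α a t τ : ℝ}

lemma kernel_nonneg (hτ : τ ∈ Icc a t) : 0 ≤ kernel α a t τ :=
  mul_nonneg (rpow_nonneg (sub_nonneg.2 hτ.2) _) (rpow_nonneg (sub_nonneg.2 hτ.1) _)

lemma measurable_kernel : Measurable (kernel α a t) := by
  unfold kernel; fun_prop

/-- Dual form of the subadditivity `(x + y) ^ (1 - α) ≤ x ^ (1 - α) + y ^ (1 - α)`. -/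
lemma rpow_sub_one_mul_rpow_sub_one_le (hα0 : 0 ≤ α) (hα1 : α ≤ 1) {x y : ℝ} (hx : 0 < x)
    (hy : 0 < y) :
    x ^ (α - 1) * y ^ (α - 1) ≤ (x + y) ^ (α - 1) * (x ^ (α - 1) + y ^ (α - 1)) := by
  have hsub := rpow_add_le_add_rpow hx.le hy.le (sub_nonneg.2 hα1) (sub_le_self 1 hα0)
  simp only [show α - 1 = -(1 - α) by ring, rpow_neg hx.le, rpow_neg hy.le,
    rpow_neg (add_pos hx hy).le]
  field_simp
  linarith

lemma kernel_le (hα0 : 0 ≤ α) (hα1 : α ≤ 1) (hτ : τ ∈ Ioo a t) :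
    kernel α a t τ ≤ (t - a) ^ (α - 1) * ((t - τ) ^ (α - 1) + (τ - a) ^ (α - 1)) := by
  have := rpow_sub_one_mul_rpow_sub_one_le hα0 hα1 (sub_pos.2 hτ.2) (sub_pos.2 hτ.1)
  rwa [sub_add_sub_cancel] at this

lemma intervalIntegrable_sub_rpow {r : ℝ} (hr : -1 < r) :
    IntervalIntegrable (fun τ => (t - τ) ^ r) volume a t := by
  simpa using
    ((intervalIntegral.intervalIntegrable_rpow' hr (a := 0) (b := t - a)).comp_sub_left t).symm

lemma intervalIntegrable_rpow_sub {r : ℝ} (hr : -1 < r) :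
    IntervalIntegrable (fun τ => (τ - a) ^ r) volume a t := by
  simpa using
    (intervalIntegral.intervalIntegrable_rpow' hr (a := 0) (b := t - a)).comp_sub_right a

lemma intervalIntegrable_kernel (hα0 : 0 < α) (hα1 : α ≤ 1) (hat : a ≤ t) :
    IntervalIntegrable (kernel α a t) volume a t := by
  have hr : (-1 : ℝ) < α - 1 := by linarith
  have hbound : IntervalIntegrable
      (fun τ => (t - a) ^ (α - 1) * ((t - τ) ^ (α - 1) + (τ - a) ^ (α - 1))) volume a t :=
    ((intervalIntegrable_sub_rpow hr).add (intervalIntegrable_rpow_sub hr)).const_mul _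
  refine hbound.mono_fun measurable_kernel.aestronglyMeasurable ?_
  filter_upwards [ae_restrict_uIoc_mem_Ioo hat] with τ hτ
  have hk := kernel_nonneg (α := α) (Ioo_subset_Icc_self hτ)
  rw [norm_of_nonneg hk, norm_of_nonneg (hk.trans (kernel_le hα0.le hα1 hτ))]
  exact kernel_le hα0.le hα1 hτ

lemma integral_rpow_sub_one (hα0 : 0 < α) (σ : ℝ) :
    ∫ s in σ..1, s ^ (α - 1) = (1 - σ ^ α) / α := by
  rw [integral_rpow (Or.inl (by linarith))]
  simp

lemma integral_one_sub_rpow_sub_one (hα0 : 0 < α) (σ : ℝ) :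
    ∫ s in σ..1, (1 - s) ^ (α - 1) = (1 - σ) ^ α / α := by
  rw [intervalIntegral.integral_comp_sub_left (fun s => s ^ (α - 1)),
    integral_rpow (Or.inl (by linarith))]
  simp [zero_rpow hα0.ne']

lemma integral_kernel_zero_one_le (hα0 : 0 < α) (hα1 : α ≤ 1) :
    ∫ s in (0 : ℝ)..1, kernel α 0 1 s ≤ 2 / α := by
  have hr : (-1 : ℝ) < α - 1 := by linarith
  have hsum := (intervalIntegrable_sub_rpow (t := 1) (a := 0) hr).add
    (intervalIntegrable_rpow_sub (t := 1) (a := 0) hr)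
  calc ∫ s in (0 : ℝ)..1, kernel α 0 1 s
      ≤ ∫ s in (0 : ℝ)..1, (1 - 0) ^ (α - 1) * ((1 - s) ^ (α - 1) + (s - 0) ^ (α - 1)) :=
        intervalIntegral.integral_mono_on_of_le_Ioo zero_le_one
          (intervalIntegrable_kernel hα0 hα1 zero_le_one) (hsum.const_mul _)
          fun s hs => kernel_le hα0.le hα1 hs
    _ = 2 / α := by
        rw [intervalIntegral.integral_const_mul, intervalIntegral.integral_add
          (intervalIntegrable_sub_rpow hr) (intervalIntegrable_rpow_sub hr)]
        simp only [sub_zero, integral_one_sub_rpow_sub_one hα0, integral_rpow_sub_one hα0]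
        simp [zero_rpow hα0.ne']
        ring

lemma concaveOn_one_sub_rpow {p : ℝ} (hp0 : 0 ≤ p) (hp1 : p ≤ 1) :
    ConcaveOn ℝ (Icc 0 1) fun s : ℝ => (1 - s) ^ p := by
  refine (((concaveOn_rpow hp0 hp1).comp_affineMap (AffineMap.lineMap 1 0)).subset ?_
    (convex_Icc 0 1)).congr ?_
  · intro s hs
    simp [AffineMap.lineMap_apply, hs.2]
  · intro s _
    simp [AffineMap.lineMap_apply, sub_eq_neg_add]

lemma two_sub_rpow_le_max (hα0 : 0 ≤ α) (hα1 : α ≤ 1) {A x y : ℝ} (hA : 0 ≤ A) (hx : 0 ≤ x)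
    (hxy : x ≤ y) (hy : y ≤ 1) :
    2 - A * (1 - y) ^ (1 - α) - 2 * y ^ (1 - α)
      ≤ max (2 - A * (1 - x) ^ (1 - α) - 2 * x ^ (1 - α)) 0 := by
  have hp0 : 0 ≤ 1 - α := sub_nonneg.2 hα1
  have hp1 : 1 - α ≤ 1 := sub_le_self 1 hα0
  have hconcave : ConcaveOn ℝ (Icc 0 1) fun s : ℝ => A * (1 - s) ^ (1 - α) + 2 * s ^ (1 - α) :=
    ((concaveOn_one_sub_rpow hp0 hp1).smul hA).add
      (((concaveOn_rpow hp0 hp1).subset Icc_subset_Ici_self (convex_Icc 0 1)).smul zero_le_two)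
  have hconvex : ConvexOn ℝ (Icc 0 1) fun s : ℝ => 2 - A * (1 - s) ^ (1 - α) - 2 * s ^ (1 - α) :=
    ((convexOn_const 2 (convex_Icc 0 1)).sub hconcave).congr fun s _ => by
      simp only [Pi.sub_apply]; ring
  refine (hconvex.le_max_of_mem_segment ⟨hx, hxy.trans hy⟩ ⟨zero_le_one, le_rfl⟩
    (by rw [segment_eq_Icc (hxy.trans hy)]; exact ⟨hxy, hy⟩)).trans (max_le_max le_rfl ?_)
  have : 0 ≤ A * (0 : ℝ) ^ (1 - α) := mul_nonneg hA (rpow_nonneg le_rfl _)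
  simpa using this

lemma kernel_zero_one_mul_two_sub_rpow {A s : ℝ} (hs : s ∈ Ioo 0 1) :
    kernel α 0 1 s * (2 - A * (1 - s) ^ (1 - α) - 2 * s ^ (1 - α))
      = 2 * kernel α 0 1 s - A * s ^ (α - 1) - 2 * (1 - s) ^ (α - 1) := by
  have h1 : s ^ (α - 1) * s ^ (1 - α) = 1 := by rw [← rpow_add hs.1]; simp
  have h2 : (1 - s) ^ (α - 1) * (1 - s) ^ (1 - α) = 1 := by
    rw [← rpow_add (sub_pos.2 hs.2)]; simp
  simp only [kernel, sub_zero]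
  linear_combination (-A) * s ^ (α - 1) * h2 - 2 * (1 - s) ^ (α - 1) * h1

lemma two_mul_kernel_sub_sign (hα0 : 0 ≤ α) (hα1 : α ≤ 1) {A σ : ℝ} (hA : 0 ≤ A)
    (hσ : σ ∈ Icc 0 1) :
    (∀ s ∈ Ioo σ 1, 2 * kernel α 0 1 s - A * s ^ (α - 1) - 2 * (1 - s) ^ (α - 1) ≤ 0) ∨
      ∀ s ∈ Ioo 0 σ, 0 ≤ 2 * kernel α 0 1 s - A * s ^ (α - 1) - 2 * (1 - s) ^ (α - 1) := by
  rcases le_or_gt (2 - A * (1 - σ) ^ (1 - α) - 2 * σ ^ (1 - α)) 0 with hrσ | hrσ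
  · refine Or.inl fun s hs => ?_
    rw [← kernel_zero_one_mul_two_sub_rpow ⟨hσ.1.trans_lt hs.1, hs.2⟩]
    exact mul_nonpos_of_nonneg_of_nonpos (kernel_nonneg ⟨hσ.1.trans hs.1.le, hs.2.le⟩)
      ((two_sub_rpow_le_max hα0 hα1 hA hσ.1 hs.1.le hs.2.le).trans (max_le hrσ le_rfl))
  · refine Or.inr fun s hs => ?_
    rw [← kernel_zero_one_mul_two_sub_rpow ⟨hs.1, hs.2.trans_le hσ.2⟩]
    refine mul_nonneg (kernel_nonneg ⟨hs.1.le, hs.2.le.trans hσ.2⟩) ?_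
    have := two_sub_rpow_le_max hα0 hα1 hA hs.1.le hs.2.le hσ.2
    by_contra! hrs
    rw [max_eq_right hrs.le] at this
    exact this.not_gt hrσ

lemma two_mul_integral_kernel_le (hα0 : 0 < α) (hα1 : α ≤ 1) {σ : ℝ} (hσ : σ ∈ Icc 0 1) :
    2 * ∫ s in σ..1, kernel α 0 1 s
      ≤ (∫ s in (0 : ℝ)..1, kernel α 0 1 s) * (1 - σ ^ α) + 2 * (1 - σ) ^ α / α := by
  set B := ∫ s in (0 : ℝ)..1, kernel α 0 1 s
  have hr : (-1 : ℝ) < α - 1 := by linarith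
  have hαB : 0 ≤ α * B :=
    mul_nonneg hα0.le (intervalIntegral.integral_nonneg zero_le_one fun s hs => kernel_nonneg hs)
  have hw := intervalIntegrable_kernel hα0 hα1 zero_le_one
  have hg_integral : ∀ c ∈ Icc (0 : ℝ) 1,
      ∫ s in c..1, 2 * kernel α 0 1 s - α * B * s ^ (α - 1) - 2 * (1 - s) ^ (α - 1)
        = 2 * (∫ s in c..1, kernel α 0 1 s) - B * (1 - c ^ α) - 2 * (1 - c) ^ α / α := by
    intro c hc
    have hwc : IntervalIntegrable (kernel α 0 1) volume c 1 :=
      hw.mono_set (uIcc_subset_uIcc (by simpa [uIcc_of_le zero_le_one] using hc) (by simp))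
    rw [intervalIntegral.integral_sub ((hwc.const_mul 2).sub
        ((intervalIntegral.intervalIntegrable_rpow' hr).const_mul _))
        ((intervalIntegrable_sub_rpow hr).const_mul 2),
      intervalIntegral.integral_sub (hwc.const_mul 2)
        ((intervalIntegral.intervalIntegrable_rpow' hr).const_mul _),
      intervalIntegral.integral_const_mul, intervalIntegral.integral_const_mul,
      intervalIntegral.integral_const_mul, integral_rpow_sub_one hα0,
      integral_one_sub_rpow_sub_one hα0]
    field_simp
  have hg : IntervalIntegrable
      (fun s => 2 * kernel α 0 1 s - α * B * s ^ (α - 1) - 2 * (1 - s) ^ (α - 1)) volume 0 1 :=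
    ((hw.const_mul 2).sub ((intervalIntegral.intervalIntegrable_rpow' hr).const_mul _)).sub
      ((intervalIntegrable_sub_rpow hr).const_mul 2)
  have htotal := hg_integral 0 ⟨le_rfl, zero_le_one⟩
  simp only [zero_rpow hα0.ne', sub_zero, one_rpow] at htotal
  have hcross := intervalIntegral.integral_nonpos_of_single_crossing hσ hg
    (by linarith [integral_kernel_zero_one_le hα0 hα1]) (two_mul_kernel_sub_sign hα0.le hα1 hαB hσ)
  linarith [hg_integral σ hσ]

lemma integral_scaledKernel (hα0 : 0 < α) {c : ℝ} (hc : a ≤ c) (hct : c ≤ t) :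
    ∫ τ in c..t, scaledKernel α a t τ
      = (t - a) ^ α * ∫ s in (c - a) / (t - a)..1, kernel α 0 1 s := by
  simp only [scaledKernel, intervalIntegral.integral_const_mul]
  obtain rfl | hat := (hc.trans hct).eq_or_lt
  · obtain rfl := hc.antisymm hct
    simp [zero_rpow hα0.ne']
  have hL : 0 < t - a := sub_pos.2 hat
  have hσ : 0 ≤ (c - a) / (t - a) := div_nonneg (sub_nonneg.2 hc) hL.le
  have hscale : ∀ s ∈ uIcc ((c - a) / (t - a)) 1,
      kernel α a t ((t - a) * s + a) = (t - a) ^ (α - 1) * (t - a) ^ (α - 1) * kernel α 0 1 s := by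
    intro s hs
    rw [uIcc_of_le ((div_le_one hL).2 (sub_le_sub_right hct a))] at hs
    simp only [kernel, sub_zero, show t - ((t - a) * s + a) = (t - a) * (1 - s) by ring,
      add_sub_cancel_right, mul_rpow hL.le (sub_nonneg.2 hs.2), mul_rpow hL.le (hσ.trans hs.1)]
    ring
  have hsub := intervalIntegral.integral_comp_mul_add (a := (c - a) / (t - a)) (b := 1)
    (kernel α a t) hL.ne' a
  rw [intervalIntegral.integral_congr hscale, intervalIntegral.integral_const_mul, smul_eq_mul,
    mul_div_cancel₀ _ hL.ne', sub_add_cancel, mul_one, sub_add_cancel,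
    eq_inv_mul_iff_mul_eq₀ hL.ne'] at hsub
  rw [← hsub, ← mul_assoc, ← mul_assoc, ← mul_assoc]
  congr 1
  rw [← rpow_add_one hL.ne', ← rpow_add hL, ← rpow_add hL]
  ring_nf

lemma scaledKernel_antitone (hα1 : α ≤ 1) {t₁ t₂ : ℝ} (hτ : τ ∈ Ioo a t₂) (h21 : t₂ ≤ t₁) :
    scaledKernel α a t₁ τ ≤ scaledKernel α a t₂ τ := by
  have hnormal : ∀ t, τ < t →
      scaledKernel α a t τ = ((t - τ) / (t - a)) ^ (α - 1) * (τ - a) ^ (α - 1) := by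
    intro t ht
    have hta : 0 < t - a := by linarith [hτ.1]
    rw [scaledKernel, kernel, div_rpow (by linarith) hta.le, show 1 - α = -(α - 1) by ring,
      rpow_neg hta.le]
    ring
  have h2τ : 0 < t₂ - τ := sub_pos.2 hτ.2
  have h2a : 0 < t₂ - a := by linarith [hτ.1]
  rw [hnormal t₁ (hτ.2.trans_le h21), hnormal t₂ hτ.2]
  refine mul_le_mul_of_nonneg_right (rpow_le_rpow_of_nonpos (div_pos h2τ h2a) ?_ (by linarith))
    (rpow_nonneg (sub_nonneg.2 hτ.1.le) _)
  rw [div_le_div_iff₀ h2a (by linarith)]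
  nlinarith [hτ.1]

lemma integral_scaledKernel_sub_add_le (hα0 : 0 < α) (hα1 : α ≤ 1) {t₁ t₂ : ℝ} (ht₂ : a ≤ t₂)
    (h21 : t₂ ≤ t₁) :
    (∫ τ in a..t₂, scaledKernel α a t₂ τ) - (∫ τ in a..t₁, scaledKernel α a t₁ τ)
        + 2 * (∫ τ in t₂..t₁, scaledKernel α a t₁ τ)
      ≤ 2 * (t₁ - t₂) ^ α / α := by
  rw [integral_scaledKernel hα0 le_rfl ht₂, integral_scaledKernel hα0 le_rfl (ht₂.trans h21),
    integral_scaledKernel hα0 ht₂ h21]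
  simp only [sub_self, zero_div]
  obtain rfl | hat := (ht₂.trans h21).eq_or_lt
  · obtain rfl := ht₂.antisymm h21
    simp [zero_rpow hα0.ne']
  have hL : 0 < t₁ - a := sub_pos.2 hat
  set σ := (t₂ - a) / (t₁ - a) with hσ_def
  have hσ : σ ∈ Icc 0 1 :=
    ⟨div_nonneg (sub_nonneg.2 ht₂) hL.le, (div_le_one hL).2 (sub_le_sub_right h21 a)⟩
  have h2 : (t₂ - a) ^ α = (t₁ - a) ^ α * σ ^ α := by
    rw [← mul_rpow hL.le hσ.1, hσ_def, mul_div_cancel₀ _ hL.ne']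
  have h12 : (t₁ - t₂) ^ α = (t₁ - a) ^ α * (1 - σ) ^ α := by
    rw [← mul_rpow hL.le (sub_nonneg.2 hσ.2), hσ_def, mul_sub, mul_div_cancel₀ _ hL.ne']
    ring_nf
  rw [h2, h12]
  linear_combination mul_le_mul_of_nonneg_left (two_mul_integral_kernel_le hα0 hα1 hσ)
    (rpow_nonneg hL.le α)

variable {E : Type*} [NormedAddCommGroup E] [NormedSpace ℝ E]

def J (α a : ℝ) (φ : ℝ → E) (t : ℝ) : E :=
  ((t - a) ^ (1 - α) / Gamma α) • ∫ τ in a..t, kernel α a t τ • φ τ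

lemma J_eq_inv_Gamma_smul (φ : ℝ → E) (t : ℝ) :
    J α a φ t = (Gamma α)⁻¹ • ∫ τ in a..t, scaledKernel α a t τ • φ τ := by
  simp only [J, scaledKernel, div_eq_inv_mul, mul_smul, intervalIntegral.integral_smul]

lemma norm_J_sub_le_of_le (hα0 : 0 < α) (hα1 : α ≤ 1) {φ : ℝ → E} {t₁ t₂ M : ℝ}
    (hφ : AEStronglyMeasurable φ (volume.restrict (Icc a t₁)))
    (hM : ∀ᵐ τ ∂volume.restrict (Icc a t₁), ‖φ τ‖ ≤ M) (hM0 : 0 ≤ M) (ht₂ : a ≤ t₂)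
    (h21 : t₂ ≤ t₁) :
    ‖J α a φ t₁ - J α a φ t₂‖ ≤ 2 / Gamma (α + 1) * M * (t₁ - t₂) ^ α := by
  have hΓ := Gamma_pos_of_pos hα0
  have hK₁ := (intervalIntegrable_kernel hα0 hα1 (ht₂.trans h21)).const_mul ((t₁ - a) ^ (1 - α))
  have hK₂ := (intervalIntegrable_kernel hα0 hα1 ht₂).const_mul ((t₂ - a) ^ (1 - α))
  have hbound := norm_integral_smul_sub_integral_smul_le ht₂ h21 hK₁ hK₂
    (fun τ hτ => mul_nonneg (rpow_nonneg (by linarith [hτ.1]) _)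
      (kernel_nonneg ⟨by linarith [hτ.1], hτ.2.le⟩))
    (fun τ hτ => scaledKernel_antitone hα1 hτ h21) hφ hM
  rw [J_eq_inv_Gamma_smul, J_eq_inv_Gamma_smul, ← smul_sub, norm_smul, norm_inv,
    norm_of_nonneg hΓ.le]
  calc (Gamma α)⁻¹ * ‖_‖ ≤ (Gamma α)⁻¹ * (M * (2 * (t₁ - t₂) ^ α / α)) := by
        gcongr
        exact hbound.trans (mul_le_mul_of_nonneg_left
          (integral_scaledKernel_sub_add_le hα0 hα1 ht₂ h21) hM0)
    _ = 2 / Gamma (α + 1) * M * (t₁ - t₂) ^ α := by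
        rw [Gamma_add_one hα0.ne']
        field_simp

lemma norm_J_sub_le (hα0 : 0 < α) (hα1 : α ≤ 1) {φ : ℝ → E} {b t₁ t₂ : ℝ}
    (hφ : MemLp φ ⊤ (volume.restrict (Icc a b))) (ht₁ : t₁ ∈ Icc a b) (ht₂ : t₂ ∈ Icc a b) :
    ‖J α a φ t₁ - J α a φ t₂‖
      ≤ 2 / Gamma (α + 1) * lpNorm φ ⊤ (volume.restrict (Icc a b)) * |t₁ - t₂| ^ α := by
  wlog h21 : t₂ ≤ t₁ generalizing t₁ t₂
  · rw [norm_sub_rev, abs_sub_comm]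
    exact this ht₂ ht₁ (le_of_not_ge h21)
  have hsub : Icc a t₁ ⊆ Icc a b := Icc_subset_Icc_right ht₁.2
  rw [abs_of_nonneg (sub_nonneg.2 h21)]
  exact norm_J_sub_le_of_le hα0 hα1 (hφ.1.mono_set hsub)
    (ae_restrict_of_ae_restrict_of_subset hsub (ae_le_lpNorm_exponent_top hφ)) lpNorm_nonneg
    ht₂.1 h21

end OperatorJ

end

open OperatorJ

theorem operator_J_holder_general
    (n : ℕ) (a b : ℝ) (α : ℝ) (hα : α ∈ Set.Ioo (0 : ℝ) 1)
    (φ : ℝ → EuclideanSpace ℝ (Fin n)) (hφm : Measurable φ)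
    (hφb : eLpNorm φ ⊤ (volume.restrict (Set.Icc a b)) < ⊤) :
    (∀ t₁ ∈ Set.Icc a b, ∀ t₂ ∈ Set.Icc a b,
      ‖((t₁ - a) ^ (1 - α) / Real.Gamma α) •
          (∫ τ in a..t₁, ((t₁ - τ) ^ (α - 1) * (τ - a) ^ (α - 1)) • φ τ)
        - ((t₂ - a) ^ (1 - α) / Real.Gamma α) •
          (∫ τ in a..t₂, ((t₂ - τ) ^ (α - 1) * (τ - a) ^ (α - 1)) • φ τ)‖
        ≤ (2 / Real.Gamma (α + 1)) * (1 + Real.sin (α * π) / (α * π))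
            * essSup (fun τ => (‖φ τ‖ : ℝ)) (volume.restrict (Set.Icc a b))
            * |t₁ - t₂| ^ α) ∧
    ContinuousOn
      (fun t => ((t - a) ^ (1 - α) / Real.Gamma α) •
        ∫ τ in a..t, ((t - τ) ^ (α - 1) * (τ - a) ^ (α - 1)) • φ τ)
      (Set.Icc a b) := by
  obtain ⟨hα0, hα1⟩ := hα
  have hφ : MemLp φ ⊤ (volume.restrict (Icc a b)) := ⟨hφm.aestronglyMeasurable, hφb⟩
  have hsinc : 0 ≤ sin (α * π) / (α * π) := by
    have hαπ : 0 < α * π := mul_pos hα0 pi_pos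
    exact div_nonneg (sin_nonneg_of_nonneg_of_le_pi hαπ.le (by nlinarith [pi_pos])) hαπ.le
  have holder : ∀ t₁ ∈ Icc a b, ∀ t₂ ∈ Icc a b, ‖J α a φ t₁ - J α a φ t₂‖
      ≤ 2 / Gamma (α + 1) * (1 + sin (α * π) / (α * π))
        * essSup (fun τ => ‖φ τ‖) (volume.restrict (Icc a b)) * |t₁ - t₂| ^ α := by
    intro t₁ ht₁ t₂ ht₂
    rw [← lpNorm_exponent_top_eq_essSup hφ]
    refine (norm_J_sub_le hα0 hα1.le hφ ht₁ ht₂).trans ?_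
    have hC : 2 / Gamma (α + 1) ≤ 2 / Gamma (α + 1) * (1 + sin (α * π) / (α * π)) :=
      le_mul_of_one_le_right (div_nonneg zero_le_two (Gamma_pos_of_pos (by linarith)).le)
        (by linarith)
    exact mul_le_mul_of_nonneg_right (mul_le_mul_of_nonneg_right hC lpNorm_nonneg)
      (rpow_nonneg (abs_nonneg _) _)
  exact ⟨holder, continuousOn_of_norm_sub_le_rpow hα0 holder⟩

/-- Hölder estimate for the operator
`(J^α_{a+} φ)(t) = ((t-a)^{1-α}/Γ(α)) ∫_a^t (t-τ)^{α-1}(τ-a)^{α-1} φ(τ) dτ`: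
`‖(J^α_{a+}φ)(t₁) − (J^α_{a+}φ)(t₂)‖ ≤ (2/Γ(α+1))(1 + sin(απ)/(απ)) ‖φ‖_∞ |t₁−t₂|^α`;
in particular `J^α_{a+}φ` is continuous on `[a,b]`. -/
theorem operator_J_holder
    (n : ℕ) (a b : ℝ) (hab : a ≤ b) (α : ℝ) (hα : α ∈ Set.Ioo (0 : ℝ) 1)
    (φ : ℝ → EuclideanSpace ℝ (Fin n)) (hφm : Measurable φ)
    (hφb : eLpNorm φ ⊤ (volume.restrict (Set.Icc a b)) < ⊤) :
    (∀ t₁ ∈ Set.Icc a b, ∀ t₂ ∈ Set.Icc a b,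
      ‖((t₁ - a) ^ (1 - α) / Real.Gamma α) •
          (∫ τ in a..t₁, ((t₁ - τ) ^ (α - 1) * (τ - a) ^ (α - 1)) • φ τ)
        - ((t₂ - a) ^ (1 - α) / Real.Gamma α) •
          (∫ τ in a..t₂, ((t₂ - τ) ^ (α - 1) * (τ - a) ^ (α - 1)) • φ τ)‖
        ≤ (2 / Real.Gamma (α + 1)) * (1 + Real.sin (α * π) / (α * π))
            * essSup (fun τ => (‖φ τ‖ : ℝ)) (volume.restrict (Set.Icc a b))
            * |t₁ - t₂| ^ α) ∧
    ContinuousOn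
      (fun t => ((t - a) ^ (1 - α) / Real.Gamma α) •
        ∫ τ in a..t, ((t - τ) ^ (α - 1) * (τ - a) ^ (α - 1)) • φ τ)
      (Set.Icc a b) :=
  operator_J_holder_general n a b α hα φ hφm hφb
end

section
/- For α ∈ (0,1), any real s, κ > 0, and t ≥ s, the inequality (1/Γ(α)) ∫_s^t e^{(τ−s)κ} / (t−τ)^{1−α} dτ ≤ e^{(t−s)κ} κ^{−α} holds. -/
open MeasureTheory Set Real

/-!
After the substitution `u = t - τ` the integrand becomes `e^{(t-s)κ} u^{α-1} e^{-κu}`, and the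
integral over `[0, t - s]` of `u^{α-1} e^{-κu}` is bounded by the full integral over `(0, ∞)`,
which equals `κ^{-α} Γ(α)`.
-/

lemma intervalIntegral_rpow_mul_exp_neg_mul_le {a r M : ℝ} (ha : 0 < a) (hr : 0 < r)
    (hM : 0 ≤ M) :
    ∫ x in (0 : ℝ)..M, x ^ (a - 1) * exp (-(r * x)) ≤ r ^ (-a) * Gamma a := by
  have key := integral_rpow_mul_exp_neg_mul_Ioi ha hr
  have hint : IntegrableOn (fun x ↦ x ^ (a - 1) * exp (-(r * x))) (Ioi 0) :=
    .of_integral_ne_zero (by rw [key]; exact (mul_pos (by positivity) (Gamma_pos_of_pos ha)).ne')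
  rw [intervalIntegral.integral_of_le hM]
  calc ∫ x in Ioc (0 : ℝ) M, x ^ (a - 1) * exp (-(r * x))
    _ ≤ ∫ x in Ioi (0 : ℝ), x ^ (a - 1) * exp (-(r * x)) := by
        apply setIntegral_mono_set hint _ Ioc_subset_Ioi_self.eventuallyLE
        filter_upwards [ae_restrict_mem measurableSet_Ioi] with x hx
        exact mul_nonneg (rpow_nonneg hx.le _) (exp_nonneg _)
    _ = r ^ (-a) * Gamma a := by
        rw [key, rpow_neg hr.le, one_div, inv_rpow hr.le]

lemma intervalIntegral_exp_mul_mul_sub_rpow (s t κ β : ℝ) :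
    ∫ τ in s..t, exp ((τ - s) * κ) * (t - τ) ^ β
      = exp ((t - s) * κ) * ∫ u in (0 : ℝ)..(t - s), u ^ β * exp (-(κ * u)) := by
  rw [← intervalIntegral.integral_const_mul, ← sub_self t,
    ← intervalIntegral.integral_comp_sub_left _ t]
  congr 1 with τ
  rw [mul_left_comm, ← exp_add]
  ring_nf

/-- The exponential estimate
`(1/Γ(α)) ∫_s^t e^{(τ-s)κ} (t-τ)^{α-1} dτ ≤ e^{(t-s)κ} κ^{-α}`. -/
theorem exp_kernel_estimate (α s t κ : ℝ) (hα : α ∈ Set.Ioo (0 : ℝ) 1)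
    (hκ : 0 < κ) (hst : s ≤ t) :
    (1 / Real.Gamma α) *
        ∫ τ in s..t, Real.exp ((τ - s) * κ) * (t - τ) ^ (α - 1)
      ≤ Real.exp ((t - s) * κ) * κ ^ (-α) := by
  have hΓ : 0 < Gamma α := Gamma_pos_of_pos hα.1
  rw [intervalIntegral_exp_mul_mul_sub_rpow, one_div_mul_eq_div, div_le_iff₀ hΓ, mul_assoc]
  exact mul_le_mul_of_nonneg_left
    (intervalIntegral_rpow_mul_exp_neg_mul_le hα.1 hκ (sub_nonneg.mpr hst)) (exp_nonneg _)
end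

section
/- Let α ∈ (0,1), t₀ < θ, and A ∈ L^∞([t₀,θ], ℝ^{n×n}). Let F be the fundamental matrix: for each s, t ↦ F(t,s) is the unique continuous solution of F(t,s) = Id/Γ(α) + ((t−s)^{1−α}/Γ(α)) ∫_s^t A(τ)F(τ,s)/((t−τ)^{1−α}(τ−s)^{1−α}) dτ. Similarly, for each t ∈ [t₀,θ] let s ↦ G(t,s) be the unique continuous solution on [t₀,t] of the dual integral equation G(t,s) = Id/Γ(α) + ((t−s)^{1−α}/Γ(α)) ∫_s^t G(t,τ) A(τ)/((t−τ)^{1−α}(τ−s)^{1−α}) dτ. Then G(t,s) = F(t,s) for all t₀ ≤ s ≤ t ≤ θ. -/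
open MeasureTheory Set Real
open scoped ENNReal

/-!
Write `k(t,τ,s) = (t-τ)^{α-1} (τ-s)^{α-1}`. The two integral equations reduce `G(t,s) = F(t,s)`
to `∫ₛᵗ k(t,τ,s) G(t,τ) A(τ) dτ = ∫ₛᵗ k(t,τ,s) A(τ) F(τ,s) dτ`. Both sides are read off from
the absolutely convergent double integral of
`(t-τ)^{α-1} (τ-σ)^{α-1} (σ-s)^{α-1} G(t,τ) A(τ) A(σ) F(σ,s)` over `s < σ < τ ≤ t`.
Integrating first in `σ` and inserting the equation for `F(τ,s)` gives
`Γ(α) ∫ k G A F - ∫ k G A`; integrating first in `τ` and inserting the equation for `G(t,σ)`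
gives `Γ(α) ∫ k G A F - ∫ k A F`. Absolute convergence comes from the Beta-integral scaling
`∫ₐᵇ (b-x)^p (x-a)^q dx = (b-a)^{p+q+1} B(q+1, p+1)`, valid for `p, q > -1`.
-/

section BetaKernel

variable {p q : ℝ}

theorem intervalIntegrable_one_sub_rpow_mul_rpow (hp : -1 < p) (hq : -1 < q) :
    IntervalIntegrable (fun u : ℝ => (1 - u) ^ p * u ^ q) volume 0 1 := by
  have hbeta := (Complex.betaIntegral_convergent (u := q + 1) (v := p + 1)
    (by simp; linarith) (by simp; linarith)).norm
  refine hbeta.congr_uIoo fun u hu => ?_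
  rw [uIoo_of_le zero_le_one] at hu
  have h1 : (0 : ℝ) ≤ 1 - u := by linarith [hu.2]
  simp only [add_sub_cancel_right, norm_mul]
  rw [← Complex.ofReal_one, ← Complex.ofReal_sub, ← Complex.ofReal_cpow h1,
    ← Complex.ofReal_cpow hu.1.le, Complex.norm_real, Complex.norm_real, Real.norm_of_nonneg
    (rpow_nonneg h1 _), Real.norm_of_nonneg (rpow_nonneg hu.1.le _), mul_comm]

theorem sub_rpow_mul_sub_rpow_eq {a b x : ℝ} (hab : a < b) (hx : x ∈ Icc a b) :
    (b - x) ^ p * (x - a) ^ q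
      = (b - a) ^ (p + q) * ((1 - (x - a) / (b - a)) ^ p * ((x - a) / (b - a)) ^ q) := by
  have hc : 0 < b - a := sub_pos.mpr hab
  set u := (x - a) / (b - a) with hu_def
  have hu : 0 ≤ u := div_nonneg (by linarith [hx.1]) hc.le
  have hv : 0 ≤ 1 - u := by rw [sub_nonneg, div_le_one hc]; linarith [hx.2]
  have hbx : b - x = (b - a) * (1 - u) := by rw [hu_def]; field_simp; ring
  have hxa : x - a = (b - a) * u := by rw [hu_def]; field_simp
  rw [hbx, hxa, mul_rpow hc.le hv, mul_rpow hc.le hu, rpow_add hc]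
  ring

theorem intervalIntegrable_sub_rpow_mul_sub_rpow (hp : -1 < p) (hq : -1 < q) {a b : ℝ}
    (hab : a < b) :
    IntervalIntegrable (fun x => (b - x) ^ p * (x - a) ^ q) volume a b := by
  have hc : b - a ≠ 0 := (sub_pos.mpr hab).ne'
  have hg := (((intervalIntegrable_one_sub_rpow_mul_rpow hp hq).comp_mul_left
    (c := (b - a)⁻¹)).comp_sub_right a).const_mul ((b - a) ^ (p + q))
  have hends : (0 : ℝ) / (b - a)⁻¹ + a = a ∧ 1 / (b - a)⁻¹ + a = b := by
    constructor <;> field_simp <;> ring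
  rw [hends.1, hends.2] at hg
  refine hg.congr_uIoo fun x hx => ?_
  rw [uIoo_of_le hab.le] at hx
  simp only [sub_rpow_mul_sub_rpow_eq hab (Ioo_subset_Icc_self hx), inv_mul_eq_div]

theorem setIntegral_sub_rpow_mul_sub_rpow {a b : ℝ} (hab : a < b) :
    ∫ x in Ioc a b, (b - x) ^ p * (x - a) ^ q
      = (b - a) ^ (p + q + 1) * ∫ u in (0 : ℝ)..1, (1 - u) ^ p * u ^ q := by
  rw [← intervalIntegral.integral_of_le hab.le]
  have hc : 0 < b - a := sub_pos.mpr hab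
  rw [intervalIntegral.integral_congr fun x hx =>
      sub_rpow_mul_sub_rpow_eq hab (by rwa [uIcc_of_le hab.le] at hx),
    intervalIntegral.integral_const_mul]
  simp_rw [sub_div]
  rw [intervalIntegral.integral_comp_div_sub (fun u => (1 - u) ^ p * u ^ q) hc.ne', sub_self,
    ← sub_div, div_self hc.ne', smul_eq_mul, rpow_add hc (p + q) 1, rpow_add hc p q, rpow_one]
  ring

theorem integrableOn_sub_rpow_mul_sub_rpow (hp : -1 < p) (hq : -1 < q) (a b : ℝ) :
    IntegrableOn (fun x => (b - x) ^ p * (x - a) ^ q) (Ioc a b) := by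
  rcases lt_or_ge a b with hab | hba
  · exact (intervalIntegrable_iff_integrableOn_Ioc_of_le hab.le).mp
      (intervalIntegrable_sub_rpow_mul_sub_rpow hp hq hab)
  · simp [Ioc_eq_empty_of_le hba]

end BetaKernel

section Triangle

variable {E : Type*} [NormedAddCommGroup E] [NormedSpace ℝ E] {s t : ℝ}

theorem setIntegral_Ioc_indicator_Iio {τ : ℝ} (hτ : τ ≤ t) (g : ℝ → E) :
    ∫ σ in Ioc s t, (Iio τ).indicator g σ = ∫ σ in Ioc s τ, g σ := by
  rw [integral_indicator measurableSet_Iio, Measure.restrict_restrict measurableSet_Iio,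
    integral_Ioc_eq_integral_Ioo]
  congr 2
  ext σ
  simp only [mem_inter_iff, mem_Iio, mem_Ioc, mem_Ioo]
  constructor
  · rintro ⟨hστ, hsσ, -⟩; exact ⟨hsσ, hστ⟩
  · rintro ⟨hsσ, hστ⟩; exact ⟨hστ, hsσ, hστ.le.trans hτ⟩

theorem setIntegral_Ioc_indicator_Ioi {σ : ℝ} (hσ : s ≤ σ) (g : ℝ → E) :
    ∫ τ in Ioc s t, (Ioi σ).indicator g τ = ∫ τ in Ioc σ t, g τ := by
  rw [integral_indicator measurableSet_Ioi, Measure.restrict_restrict measurableSet_Ioi]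
  congr 2
  ext τ
  simp only [mem_inter_iff, mem_Ioi, mem_Ioc]
  constructor
  · rintro ⟨hστ, -, hτt⟩; exact ⟨hστ, hτt⟩
  · rintro ⟨hστ, hτt⟩; exact ⟨hστ, hσ.trans_lt hστ, hτt⟩

theorem integral_Ioc_integral_Ioc_swap {f : ℝ → ℝ → E}
    (hf : Integrable ({x : ℝ × ℝ | x.2 < x.1}.indicator (Function.uncurry f))
      ((volume.restrict (Ioc s t)).prod (volume.restrict (Ioc s t)))) :
    ∫ τ in Ioc s t, ∫ σ in Ioc s τ, f τ σ = ∫ σ in Ioc s t, ∫ τ in Ioc σ t, f τ σ := by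
  have hslice₁ : ∀ τ ∈ Ioc s t, ∫ σ in Ioc s t, {x : ℝ × ℝ | x.2 < x.1}.indicator
      (Function.uncurry f) (τ, σ) = ∫ σ in Ioc s τ, f τ σ := fun τ hτ => by
    rw [← setIntegral_Ioc_indicator_Iio hτ.2]
    rfl
  have hslice₂ : ∀ σ ∈ Ioc s t, ∫ τ in Ioc s t, {x : ℝ × ℝ | x.2 < x.1}.indicator
      (Function.uncurry f) (τ, σ) = ∫ τ in Ioc σ t, f τ σ := fun σ hσ => by
    rw [← setIntegral_Ioc_indicator_Ioi hσ.1.le]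
    rfl
  rw [← setIntegral_congr_fun measurableSet_Ioc hslice₁,
    ← setIntegral_congr_fun measurableSet_Ioc hslice₂]
  exact integral_integral_swap hf

theorem ae_restrict_Ioc_mem_Ioo : ∀ᵐ x ∂volume.restrict (Ioc s t), x ∈ Ioo s t := by
  rw [← restrict_Ioo_eq_restrict_Ioc]
  exact ae_restrict_mem measurableSet_Ioo

theorem integrable_triangle_kernel {p q r : ℝ} (hp : -1 < p) (hq : -1 < q)
    (hr : -1 < r) :
    Integrable ({x : ℝ × ℝ | x.2 < x.1}.indicator
        fun x => (t - x.1) ^ p * ((x.1 - x.2) ^ q * (x.2 - s) ^ r))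
      ((volume.restrict (Ioc s t)).prod (volume.restrict (Ioc s t))) := by
  have hmeas : Measurable ({x : ℝ × ℝ | x.2 < x.1}.indicator
      fun x => (t - x.1) ^ p * ((x.1 - x.2) ^ q * (x.2 - s) ^ r)) :=
    Measurable.indicator (by fun_prop) (measurableSet_lt measurable_snd measurable_fst)
  rw [integrable_prod_iff hmeas.aestronglyMeasurable]
  constructor
  · refine ae_of_all _ fun τ => ?_
    change Integrable
      ((Iio τ).indicator fun σ => (t - τ) ^ p * ((τ - σ) ^ q * (σ - s) ^ r)) _
    rw [integrable_indicator_iff measurableSet_Iio, IntegrableOn,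
      Measure.restrict_restrict measurableSet_Iio]
    exact IntegrableOn.mono_set ((integrableOn_sub_rpow_mul_sub_rpow hq hr s τ).const_mul _)
      fun σ hσ => ⟨hσ.2.1, hσ.1.le⟩
  · have hqr : -1 < q + r + 1 := by linarith
    have hint := (integrableOn_sub_rpow_mul_sub_rpow hp hqr s t).mul_const
      (∫ u in (0 : ℝ)..1, (1 - u) ^ q * u ^ r)
    refine hint.congr ?_
    filter_upwards [ae_restrict_Ioc_mem_Ioo] with τ hτ
    simp only [norm_indicator_eq_indicator_norm]
    change _ = ∫ σ in Ioc s t, (Iio τ).indicator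
      (fun σ => ‖(t - τ) ^ p * ((τ - σ) ^ q * (σ - s) ^ r)‖) σ
    have hnonneg : ∀ σ ∈ Ioc s τ, 0 ≤ (t - τ) ^ p * ((τ - σ) ^ q * (σ - s) ^ r) :=
      fun σ hσ => mul_nonneg (rpow_nonneg (sub_nonneg.mpr hτ.2.le) p)
        (mul_nonneg (rpow_nonneg (sub_nonneg.mpr hσ.2) q) (rpow_nonneg (sub_nonneg.mpr hσ.1.le) r))
    rw [setIntegral_Ioc_indicator_Iio hτ.2.le,
      setIntegral_congr_fun measurableSet_Ioc fun σ hσ => norm_of_nonneg (hnonneg σ hσ),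
      integral_const_mul, setIntegral_sub_rpow_mul_sub_rpow hτ.1, mul_assoc]

theorem integral_Ioc_rpow_smul_mul_integral_eq {R : Type*} [NormedRing R] [NormedAlgebra ℝ R]
    {p : ℝ} (hp : -1 < p) {u v : ℝ → R} (hu : MemLp u ∞ (volume.restrict (Ioc s t)))
    (hv : MemLp v ∞ (volume.restrict (Ioc s t))) :
    ∫ τ in Ioc s t, (t - τ) ^ p • (u τ * ∫ σ in Ioc s τ, ((τ - σ) ^ p * (σ - s) ^ p) • v σ)
      = ∫ σ in Ioc s t,
          (σ - s) ^ p • ((∫ τ in Ioc σ t, ((t - τ) ^ p * (τ - σ) ^ p) • u τ) * v σ) := by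
  set f : ℝ → ℝ → R := fun τ σ => ((t - τ) ^ p * ((τ - σ) ^ p * (σ - s) ^ p)) • (u τ * v σ)
  have hf : Integrable ({x : ℝ × ℝ | x.2 < x.1}.indicator (Function.uncurry f))
      ((volume.restrict (Ioc s t)).prod (volume.restrict (Ioc s t))) := by
    refine ((integrable_triangle_kernel hp hp hp).smul_of_top_left
      ((hv.comp_snd _).mul' (hu.comp_fst _))).congr (ae_of_all _ fun x => ?_)
    obtain ⟨τ, σ⟩ := x
    by_cases h : σ < τ <;> simp [f, h]
  have hleft : ∀ τ ∈ Ioc s t,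
      (t - τ) ^ p • (u τ * ∫ σ in Ioc s τ, ((τ - σ) ^ p * (σ - s) ^ p) • v σ)
      = ∫ σ in Ioc s τ, f τ σ := fun τ hτ => by
    have hint : IntegrableOn (fun σ => ((τ - σ) ^ p * (σ - s) ^ p) • v σ) (Ioc s τ) :=
      (integrableOn_sub_rpow_mul_sub_rpow hp hp s τ).smul_of_top_left
      (hv.mono_measure (Measure.restrict_mono (Ioc_subset_Ioc_right hτ.2) le_rfl))
    rw [← integral_const_mul_of_integrable hint, ← integral_smul]
    simp only [f, mul_smul_comm, smul_smul]
  have hright : ∀ σ ∈ Ioc s t,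
      (σ - s) ^ p • ((∫ τ in Ioc σ t, ((t - τ) ^ p * (τ - σ) ^ p) • u τ) * v σ)
      = ∫ τ in Ioc σ t, f τ σ := fun σ hσ => by
    have hint : IntegrableOn (fun τ => ((t - τ) ^ p * (τ - σ) ^ p) • u τ) (Ioc σ t) :=
      (integrableOn_sub_rpow_mul_sub_rpow hp hp σ t).smul_of_top_left
      (hu.mono_measure (Measure.restrict_mono (Ioc_subset_Ioc_left hσ.1.le) le_rfl))
    rw [← integral_mul_const_of_integrable hint, ← integral_smul]
    simp only [f, smul_mul_assoc, smul_smul]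
    congr 1 with τ
    ring_nf
  rw [setIntegral_congr_fun measurableSet_Ioc hleft,
    setIntegral_congr_fun measurableSet_Ioc hright]
  exact integral_Ioc_integral_Ioc_swap hf

end Triangle

theorem ContinuousOn.memLp_top_of_subset_isCompact {X E : Type*} [TopologicalSpace X]
    [MeasurableSpace X] [OpensMeasurableSpace X] [NormedAddCommGroup E] {μ : Measure X}
    {f : X → E} {K S : Set X} (hf : ContinuousOn f K) (hK : IsCompact K) (hS : MeasurableSet S)
    (hSK : S ⊆ K) : MemLp f ∞ (μ.restrict S) := by
  obtain ⟨C, hC⟩ := hK.exists_bound_of_continuousOn hf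
  exact memLp_top_of_bound (hf.aestronglyMeasurable_of_subset_isCompact hK hS hSK) C
    (ae_restrict_of_forall_mem hS fun x hx => hC x (hSK hx))

theorem rpow_smul_sub_one_eq_of_eq {R : Type*} [Ring R] [Algebra ℝ R] {α c r : ℝ} (hc : c ≠ 0)
    (hr : 0 < r) {x y : R} (h : x = c⁻¹ • 1 + (r ^ (1 - α) / c) • y) :
    r ^ (α - 1) • (c • x - 1) = y := by
  have hr' : r ^ (α - 1) * r ^ (1 - α) = 1 := by
    rw [← rpow_add hr, sub_add_sub_cancel', sub_self, rpow_zero]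
  rw [h, smul_add, smul_smul, smul_smul, mul_inv_cancel₀ hc, one_smul, add_sub_cancel_left,
    smul_smul, mul_div_cancel₀ _ hc, hr', one_smul]

theorem integral_smul_mul_eq_of_integral_equations {R : Type*} [NormedRing R]
    [NormedAlgebra ℝ R] {α c s t : ℝ} {A F G : ℝ → R} (hα : 0 < α) (hc : c ≠ 0)
    (hA : MemLp A ∞ (volume.restrict (Ioc s t))) (hF : MemLp F ∞ (volume.restrict (Ioc s t)))
    (hG : MemLp G ∞ (volume.restrict (Ioc s t)))
    (hFeq : ∀ τ ∈ Ioo s t, F τ = c⁻¹ • 1 + ((τ - s) ^ (1 - α) / c) •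
      ∫ σ in Ioc s τ, ((τ - σ) ^ (α - 1) * (σ - s) ^ (α - 1)) • (A σ * F σ))
    (hGeq : ∀ σ ∈ Ioo s t, G σ = c⁻¹ • 1 + ((t - σ) ^ (1 - α) / c) •
      ∫ τ in Ioc σ t, ((t - τ) ^ (α - 1) * (τ - σ) ^ (α - 1)) • (G τ * A τ)) :
    ∫ τ in Ioc s t, ((t - τ) ^ (α - 1) * (τ - s) ^ (α - 1)) • (G τ * A τ)
      = ∫ τ in Ioc s t, ((t - τ) ^ (α - 1) * (τ - s) ^ (α - 1)) • (A τ * F τ) := by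
  have hp : -1 < α - 1 := by linarith
  have hweight : ∀ g : ℝ → R, MemLp g ∞ (volume.restrict (Ioc s t)) →
      Integrable (fun τ => ((t - τ) ^ (α - 1) * (τ - s) ^ (α - 1)) • g τ)
        (volume.restrict (Ioc s t)) := fun g hg =>
    (integrableOn_sub_rpow_mul_sub_rpow hp hp s t).smul_of_top_left hg
  have hGA : MemLp (fun τ => G τ * A τ) ∞ (volume.restrict (Ioc s t)) := hA.mul' hG
  have hAF : MemLp (fun τ => A τ * F τ) ∞ (volume.restrict (Ioc s t)) := hF.mul' hA
  have hGAF : MemLp (fun τ => G τ * (A τ * F τ)) ∞ (volume.restrict (Ioc s t)) := hAF.mul' hG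
  have hleft : ∀ᵐ τ ∂volume.restrict (Ioc s t),
      (t - τ) ^ (α - 1) • (G τ * A τ *
        ∫ σ in Ioc s τ, ((τ - σ) ^ (α - 1) * (σ - s) ^ (α - 1)) • (A σ * F σ))
      = c • (((t - τ) ^ (α - 1) * (τ - s) ^ (α - 1)) • (G τ * (A τ * F τ)))
        - ((t - τ) ^ (α - 1) * (τ - s) ^ (α - 1)) • (G τ * A τ) := by
    filter_upwards [ae_restrict_Ioc_mem_Ioo] with τ hτ
    rw [← rpow_smul_sub_one_eq_of_eq hc (sub_pos.mpr hτ.1) (hFeq τ hτ)]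
    simp only [mul_smul_comm, mul_sub, mul_one, mul_assoc]
    module
  have hright : ∀ᵐ σ ∂volume.restrict (Ioc s t),
      (σ - s) ^ (α - 1) • ((∫ τ in Ioc σ t,
        ((t - τ) ^ (α - 1) * (τ - σ) ^ (α - 1)) • (G τ * A τ)) * (A σ * F σ))
      = c • (((t - σ) ^ (α - 1) * (σ - s) ^ (α - 1)) • (G σ * (A σ * F σ)))
        - ((t - σ) ^ (α - 1) * (σ - s) ^ (α - 1)) • (A σ * F σ) := by
    filter_upwards [ae_restrict_Ioc_mem_Ioo] with σ hσ
    rw [← rpow_smul_sub_one_eq_of_eq hc (sub_pos.mpr hσ.2) (hGeq σ hσ)]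
    simp only [smul_mul_assoc, sub_mul, one_mul]
    module
  have hcGAF : Integrable
      (fun τ => c • (((t - τ) ^ (α - 1) * (τ - s) ^ (α - 1)) • (G τ * (A τ * F τ))))
      (volume.restrict (Ioc s t)) := (hweight _ hGAF).smul c
  have hfubini := integral_Ioc_rpow_smul_mul_integral_eq hp hGA hAF
  rw [integral_congr_ae hleft, integral_congr_ae hright, integral_sub hcGAF (hweight _ hGA),
    integral_sub hcGAF (hweight _ hAF)] at hfubini
  exact sub_right_injective hfubini

theorem fundamental_matrix_duality_general
    (n : ℕ) (α t₀ θ : ℝ) (hα : α ∈ Set.Ioo (0 : ℝ) 1)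
    (A : ℝ → (EuclideanSpace ℝ (Fin n) →L[ℝ] EuclideanSpace ℝ (Fin n)))
    (hAm : Measurable A)
    (hAb : eLpNorm A ⊤ (volume.restrict (Set.Icc t₀ θ)) < ⊤)
    (F G : ℝ → ℝ → (EuclideanSpace ℝ (Fin n) →L[ℝ] EuclideanSpace ℝ (Fin n)))
    (hFc : ∀ s ∈ Set.Icc t₀ θ, ContinuousOn (fun t => F t s) (Set.Icc s θ))
    (hFeq : ∀ s ∈ Set.Icc t₀ θ, ∀ t ∈ Set.Icc s θ,
      F t s = (Real.Gamma α)⁻¹ • (1 : EuclideanSpace ℝ (Fin n) →L[ℝ] EuclideanSpace ℝ (Fin n))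
        + ((t - s) ^ (1 - α) / Real.Gamma α) •
            ∫ τ in s..t, ((t - τ) ^ (α - 1) * (τ - s) ^ (α - 1)) • (A τ * F τ s))
    (hGc : ∀ t ∈ Set.Icc t₀ θ, ContinuousOn (fun s => G t s) (Set.Icc t₀ t))
    (hGeq : ∀ t ∈ Set.Icc t₀ θ, ∀ s ∈ Set.Icc t₀ t,
      G t s = (Real.Gamma α)⁻¹ • (1 : EuclideanSpace ℝ (Fin n) →L[ℝ] EuclideanSpace ℝ (Fin n))
        + ((t - s) ^ (1 - α) / Real.Gamma α) •
            ∫ τ in s..t, ((t - τ) ^ (α - 1) * (τ - s) ^ (α - 1)) • (G t τ * A τ)) :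
    ∀ s t : ℝ, t₀ ≤ s → s ≤ t → t ≤ θ → G t s = F t s := by
  intro s t hs hst htθ
  have hA : MemLp A ∞ (volume.restrict (Ioc s t)) :=
    MemLp.mono_measure (μ := volume.restrict (Icc t₀ θ))
      (Measure.restrict_mono (Ioc_subset_Icc_self.trans (Icc_subset_Icc hs htθ)) le_rfl)
      ⟨hAm.aestronglyMeasurable, hAb⟩
  have hF : MemLp (fun τ => F τ s) ∞ (volume.restrict (Ioc s t)) :=
    (hFc s ⟨hs, hst.trans htθ⟩).memLp_top_of_subset_isCompact isCompact_Icc measurableSet_Ioc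
      fun x hx => ⟨hx.1.le, hx.2.trans htθ⟩
  have hG : MemLp (G t) ∞ (volume.restrict (Ioc s t)) :=
    (hGc t ⟨hs.trans hst, htθ⟩).memLp_top_of_subset_isCompact isCompact_Icc measurableSet_Ioc
      fun x hx => ⟨hs.trans hx.1.le, hx.2⟩
  have hkey := integral_smul_mul_eq_of_integral_equations hα.1 (Gamma_pos_of_pos hα.1).ne'
    hA hF hG (fun τ hτ => (hFeq s ⟨hs, hst.trans htθ⟩ τ ⟨hτ.1.le, hτ.2.le.trans htθ⟩).trans
      (by rw [intervalIntegral.integral_of_le hτ.1.le]))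
    (fun σ hσ => (hGeq t ⟨hs.trans hst, htθ⟩ σ ⟨hs.trans hσ.1.le, hσ.2.le⟩).trans
      (by rw [intervalIntegral.integral_of_le hσ.2.le]))
  rw [hGeq t ⟨hs.trans hst, htθ⟩ s ⟨hs, hst⟩, hFeq s ⟨hs, hst.trans htθ⟩ t ⟨hst, htθ⟩,
    intervalIntegral.integral_of_le hst, intervalIntegral.integral_of_le hst, hkey]

/-- Duality of the fundamental solution matrix: if `t ↦ F(t,s)` solves
`F(t,s) = Id/Γ(α) + ((t-s)^{1-α}/Γ(α)) ∫_s^t (t-τ)^{α-1}(τ-s)^{α-1} A(τ)F(τ,s) dτ`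
and `s ↦ G(t,s)` solves the dual equation
`G(t,s) = Id/Γ(α) + ((t-s)^{1-α}/Γ(α)) ∫_s^t (t-τ)^{α-1}(τ-s)^{α-1} G(t,τ)A(τ) dτ`,
then `G = F` on `Ω`. -/
theorem fundamental_matrix_duality
    (n : ℕ) (α t₀ θ : ℝ) (hα : α ∈ Set.Ioo (0 : ℝ) 1) (ht : t₀ < θ)
    (A : ℝ → (EuclideanSpace ℝ (Fin n) →L[ℝ] EuclideanSpace ℝ (Fin n)))
    (hAm : Measurable A)
    (hAb : eLpNorm A ⊤ (volume.restrict (Set.Icc t₀ θ)) < ⊤)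
    (F G : ℝ → ℝ → (EuclideanSpace ℝ (Fin n) →L[ℝ] EuclideanSpace ℝ (Fin n)))
    (hFc : ∀ s ∈ Set.Icc t₀ θ, ContinuousOn (fun t => F t s) (Set.Icc s θ))
    (hFeq : ∀ s ∈ Set.Icc t₀ θ, ∀ t ∈ Set.Icc s θ,
      F t s = (Real.Gamma α)⁻¹ • (1 : EuclideanSpace ℝ (Fin n) →L[ℝ] EuclideanSpace ℝ (Fin n))
        + ((t - s) ^ (1 - α) / Real.Gamma α) •
            ∫ τ in s..t, ((t - τ) ^ (α - 1) * (τ - s) ^ (α - 1)) • (A τ * F τ s))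
    (hGc : ∀ t ∈ Set.Icc t₀ θ, ContinuousOn (fun s => G t s) (Set.Icc t₀ t))
    (hGeq : ∀ t ∈ Set.Icc t₀ θ, ∀ s ∈ Set.Icc t₀ t,
      G t s = (Real.Gamma α)⁻¹ • (1 : EuclideanSpace ℝ (Fin n) →L[ℝ] EuclideanSpace ℝ (Fin n))
        + ((t - s) ^ (1 - α) / Real.Gamma α) •
            ∫ τ in s..t, ((t - τ) ^ (α - 1) * (τ - s) ^ (α - 1)) • (G t τ * A τ)) :
    ∀ s t : ℝ, t₀ ≤ s → s ≤ t → t ≤ θ → G t s = F t s :=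
  fundamental_matrix_duality_general n α t₀ θ hα A hAm hAb F G hFc hFeq hGc hGeq
end

section
/- Let α ∈ (0,1), t₀ < t* < θ, and φ ∈ L^∞([t₀,t*], ℝⁿ). Define ψ(t) = (sin(απ)/π) ∫_{t₀}^{t*} (t*−τ)^α φ(τ)/(t−τ) dτ for t ∈ [t*,θ]. Then ψ is continuous on [t*,θ] and, for every t ∈ (t*,θ], the identity ∫_{t₀}^{t*} φ(τ)/(t−τ)^{1−α} dτ = ∫_{t*}^{t} ψ(τ)/((t−τ)^{1−α}(τ−t*)^α) dτ holds. -/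
open MeasureTheory Set Real

/-!
For `σ < t* < t`, the substitution by the Möbius map sending `t*, t, σ` to `0, 1, ∞` turns
`∫_{t*}^{t} (t-τ)^(α-1) (τ-t*)^(-α) (τ-σ)⁻¹ dτ` into the beta integral
`B(1-α, α) = Γ(1-α) Γ(α) = π / sin(πα)`, and yields `(π / sin(πα)) (t-σ)^(α-1) (t*-σ)^(-α)`.
Multiplying by `(t*-σ)^α φ(σ)` and integrating over `σ ∈ (t₀, t*)`, Fubini (the integrand is
dominated by `‖φ‖_∞ (t-τ)^(α-1) (τ-t*)^(-α) (t*-σ)^(α-1)`) gives the identity. Since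
`(t*-σ)^α / (t-σ) ≤ (t*-σ)^(α-1)` for `t ≥ t*`, continuity of `ψ` is dominated convergence.
-/

lemma integral_Ioo_rpow_mul_one_sub_rpow {u v : ℝ} (hu : 0 < u) (hv : 0 < v) :
    ∫ x in Ioo (0 : ℝ) 1, x ^ (u - 1) * (1 - x) ^ (v - 1) = ProbabilityTheory.beta u v := by
  rw [ProbabilityTheory.beta_eq_betaIntegralReal u v hu hv, Complex.betaIntegral,
    intervalIntegral.integral_of_le zero_le_one, ← integral_Ioc_eq_integral_Ioo,
    ← RCLike.re_to_complex, ← integral_re]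
  · refine setIntegral_congr_fun measurableSet_Ioc fun x ⟨hx₀, hx₁⟩ ↦ ?_
    norm_cast
    rw [← Complex.ofReal_cpow hx₀.le, ← Complex.ofReal_cpow (sub_nonneg.2 hx₁)]
    norm_cast
  · exact (intervalIntegrable_iff_integrableOn_Ioc_of_le zero_le_one).1
      (Complex.betaIntegral_convergent (by simpa) (by simpa))

lemma beta_one_sub_self (α : ℝ) : ProbabilityTheory.beta (1 - α) α = π / sin (π * α) := by
  rw [ProbabilityTheory.beta, sub_add_cancel, Real.Gamma_one, div_one, mul_comm,
    Real.Gamma_mul_Gamma_one_sub]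

/-- The Möbius transformation sending `a`, `b`, `c` to `0`, `1`, `∞`. -/
noncomputable def mobiusZeroOneInf (a b c τ : ℝ) : ℝ := (b - c) * (τ - a) / ((b - a) * (τ - c))

section Mobius

variable {a b c : ℝ}

lemma hasDerivAt_mobiusZeroOneInf {τ : ℝ} (hab : a ≠ b) (hτc : τ ≠ c) :
    HasDerivAt (mobiusZeroOneInf a b c) ((b - c) * (a - c) / ((b - a) * (τ - c) ^ 2)) τ := by
  have hba : b - a ≠ 0 := sub_ne_zero.2 hab.symm
  have hτc' : τ - c ≠ 0 := sub_ne_zero.2 hτc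
  have hnum : HasDerivAt (fun τ ↦ (b - c) * (τ - a)) (b - c) τ := by
    simpa using ((hasDerivAt_id τ).sub_const a).const_mul (b - c)
  have hden : HasDerivAt (fun τ ↦ (b - a) * (τ - c)) (b - a) τ := by
    simpa using ((hasDerivAt_id τ).sub_const c).const_mul (b - a)
  refine (hnum.div hden (mul_ne_zero hba hτc')).congr_deriv ?_
  field_simp
  ring

lemma strictMonoOn_mobiusZeroOneInf (hca : c < a) (hab : a < b) :
    StrictMonoOn (mobiusZeroOneInf a b c) (Ioi c) := by
  intro x hx y hy hxy
  have hx : 0 < x - c := sub_pos.2 hx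
  have hy : 0 < y - c := sub_pos.2 hy
  unfold mobiusZeroOneInf
  rw [div_lt_div_iff₀ (by nlinarith) (by nlinarith)]
  nlinarith [mul_pos (mul_pos (sub_pos.2 (hca.trans hab)) (sub_pos.2 hab))
    (mul_pos (sub_pos.2 hxy) (sub_pos.2 hca))]

lemma mobiusZeroOneInf_image_Ioo (hca : c < a) (hab : a < b) :
    mobiusZeroOneInf a b c '' Ioo a b = Ioo 0 1 := by
  have ha : mobiusZeroOneInf a b c a = 0 := by simp [mobiusZeroOneInf]
  have hb : mobiusZeroOneInf a b c b = 1 := by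
    rw [mobiusZeroOneInf, div_eq_one_iff_eq (by nlinarith)]
    ring
  have hcont : ContinuousOn (mobiusZeroOneInf a b c) (Icc a b) :=
    continuousOn_const.mul (continuousOn_id.sub continuousOn_const) |>.div
      (continuousOn_const.mul (continuousOn_id.sub continuousOn_const))
      fun x hx ↦ by nlinarith [hx.1]
  refine Subset.antisymm ?_ ?_
  · have hmono : StrictMonoOn (mobiusZeroOneInf a b c) (Icc a b) :=
      (strictMonoOn_mobiusZeroOneInf hca hab).mono fun x hx ↦ hca.trans_le hx.1
    simpa [ha, hb] using hmono.image_Ioo_subset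
  · simpa [ha, hb] using intermediate_value_Ioo hab.le hcont

lemma deriv_mul_rpow_mobiusZeroOneInf {α τ : ℝ} (hca : c < a) (hτ : τ ∈ Ioo a b) :
    (b - c) * (a - c) / ((b - a) * (τ - c) ^ 2) *
        (mobiusZeroOneInf a b c τ ^ (-α) * (1 - mobiusZeroOneInf a b c τ) ^ (α - 1)) =
      (b - c) ^ (1 - α) * (a - c) ^ α * ((b - τ) ^ (α - 1) * (τ - a) ^ (-α) * (τ - c)⁻¹) := by
  obtain ⟨hτa, hτb⟩ := hτ
  have hac : 0 < a - c := sub_pos.2 hca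
  have hba : 0 < b - a := by linarith
  have hbc : 0 < b - c := by linarith
  have hτa : 0 < τ - a := sub_pos.2 hτa
  have hbτ : 0 < b - τ := sub_pos.2 hτb
  have hτc : 0 < τ - c := by linarith
  have hone_sub : 1 - mobiusZeroOneInf a b c τ = (a - c) * (b - τ) / ((b - a) * (τ - c)) := by
    unfold mobiusZeroOneInf
    field_simp
    ring
  rw [hone_sub, mobiusZeroOneInf, div_rpow (by positivity) (by positivity),
    div_rpow (by positivity) (by positivity), mul_rpow hbc.le hτa.le, mul_rpow hba.le hτc.le,
    mul_rpow hac.le hbτ.le, mul_rpow hba.le hτc.le]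
  -- express every power through `x ^ α`, so that the identity becomes one of rational functions
  rw [rpow_sub_one hac.ne', rpow_sub_one hbτ.ne', rpow_sub_one hba.ne', rpow_sub_one hτc.ne',
    rpow_neg hbc.le, rpow_neg hτa.le, rpow_neg hba.le, rpow_neg hτc.le, rpow_sub hbc, rpow_one]
  have := rpow_pos_of_pos hbc α
  have := rpow_pos_of_pos hτa α
  have := rpow_pos_of_pos hba α
  have := rpow_pos_of_pos hτc α
  have := rpow_pos_of_pos hac α
  have := rpow_pos_of_pos hbτ α
  field_simp

end Mobius

theorem integral_Ioo_sub_rpow_mul_sub_rpow_mul_inv_sub {α a b c : ℝ} (h0 : 0 < α) (h1 : α < 1)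
    (hca : c < a) (hab : a < b) :
    ∫ τ in Ioo a b, (b - τ) ^ (α - 1) * (τ - a) ^ (-α) * (τ - c)⁻¹ =
      π / sin (π * α) * (b - c) ^ (α - 1) * (a - c) ^ (-α) := by
  have hbeta : ∫ x in Ioo (0 : ℝ) 1, x ^ (-α) * (1 - x) ^ (α - 1) = π / sin (π * α) := by
    rw [← beta_one_sub_self, ← integral_Ioo_rpow_mul_one_sub_rpow (by linarith) h0,
      sub_sub_cancel_left]
  have hac : 0 < a - c := sub_pos.2 hca
  have hbc : 0 < b - c := sub_pos.2 (hca.trans hab)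
  have hsubst := integral_image_eq_integral_abs_deriv_smul (measurableSet_Ioo (a := a) (b := b))
    (fun τ hτ ↦ (hasDerivAt_mobiusZeroOneInf hab.ne (hca.trans hτ.1).ne').hasDerivWithinAt)
    ((strictMonoOn_mobiusZeroOneInf hca hab).injOn.mono fun τ hτ ↦ hca.trans hτ.1)
    fun x ↦ x ^ (-α) * (1 - x) ^ (α - 1)
  have hjac : ∀ τ ∈ Ioo a b, |(b - c) * (a - c) / ((b - a) * (τ - c) ^ 2)| •
        (mobiusZeroOneInf a b c τ ^ (-α) * (1 - mobiusZeroOneInf a b c τ) ^ (α - 1)) =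
      (b - c) ^ (1 - α) * (a - c) ^ α * ((b - τ) ^ (α - 1) * (τ - a) ^ (-α) * (τ - c)⁻¹) := by
    intro τ hτ
    have hτc : 0 < τ - c := by linarith [hτ.1]
    rw [abs_of_pos (by have := sub_pos.2 hab; positivity), smul_eq_mul,
      deriv_mul_rpow_mobiusZeroOneInf hca hτ]
  rw [mobiusZeroOneInf_image_Ioo hca hab, hbeta, setIntegral_congr_fun measurableSet_Ioo hjac,
    integral_const_mul] at hsubst
  have hinv : (b - c) ^ (1 - α) * (a - c) ^ α * ((b - c) ^ (α - 1) * (a - c) ^ (-α)) = 1 := by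
    rw [mul_mul_mul_comm, ← rpow_add hbc, ← rpow_add hac]
    norm_num
  rw [hsubst]
  linear_combination (-∫ τ in Ioo a b, (b - τ) ^ (α - 1) * (τ - a) ^ (-α) * (τ - c)⁻¹) * hinv

section Integrability

variable {a b p q : ℝ}

lemma integrableOn_Ioo_sub_rpow_left (hab : a ≤ b) (hq : -1 < q) :
    IntegrableOn (fun τ ↦ (τ - a) ^ q) (Ioo a b) := by
  have := (intervalIntegral.intervalIntegrable_rpow' (a := 0) (b := b - a) hq).comp_sub_right a
  rw [zero_add, sub_add_cancel, intervalIntegrable_iff_integrableOn_Ioo_of_le hab] at this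
  exact this

lemma integrableOn_Ioo_sub_rpow_right (hab : a ≤ b) (hp : -1 < p) :
    IntegrableOn (fun τ ↦ (b - τ) ^ p) (Ioo a b) := by
  have := (intervalIntegral.intervalIntegrable_rpow' (a := b - a) (b := 0) hp).comp_sub_left b
  rw [sub_sub_cancel, sub_zero, intervalIntegrable_iff_integrableOn_Ioo_of_le hab] at this
  exact this

lemma integrableOn_Ioo_sub_rpow_mul_sub_rpow (hab : a < b) (hp : -1 < p) (hq : -1 < q) :
    IntegrableOn (fun τ ↦ (b - τ) ^ p * (τ - a) ^ q) (Ioo a b) := by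
  obtain ⟨m, ham, hmb⟩ := exists_between hab
  rw [← Ioc_union_Ioo_eq_Ioo ham.le hmb]
  refine IntegrableOn.union ?_ ?_
  · refine IntegrableOn.continuousOn_mul_of_subset ?_ ?_ isCompact_Icc measurableSet_Ioc
      Ioc_subset_Icc_self (K := Icc a m)
    · exact ContinuousOn.rpow_const (by fun_prop) fun x hx ↦ Or.inl (by linarith [hx.2])
    · rw [integrableOn_Ioc_iff_integrableOn_Ioo]
      exact integrableOn_Ioo_sub_rpow_left ham.le hq
  · refine IntegrableOn.mul_continuousOn_of_subset (integrableOn_Ioo_sub_rpow_right hmb.le hp)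
      ?_ measurableSet_Ioo isCompact_Icc Ioo_subset_Icc_self (K := Icc m b)
    exact ContinuousOn.rpow_const (by fun_prop) fun x hx ↦ Or.inl (by linarith [hx.1])

end Integrability

lemma MeasureTheory.MemLp.ae_norm_le_toReal_eLpNorm_top {X E : Type*} [MeasurableSpace X]
    {μ : Measure X} [NormedAddCommGroup E] {f : X → E} (hf : MemLp f ⊤ μ) :
    ∀ᵐ x ∂μ, ‖f x‖ ≤ (eLpNorm f ⊤ μ).toReal := by
  have hfin : eLpNormEssSup f μ ≠ ⊤ := by simpa using hf.eLpNorm_ne_top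
  filter_upwards [enorm_ae_le_eLpNormEssSup f μ] with x hx
  rw [← toReal_enorm, eLpNorm_exponent_top]
  exact ENNReal.toReal_mono hfin hx

variable {E : Type*} [NormedAddCommGroup E] [NormedSpace ℝ E]

noncomputable def fractionalContinuation (α a b : ℝ) (g : ℝ → E) (t : ℝ) : E :=
  (sin (α * π) / π) • ∫ σ in Ioo a b, ((b - σ) ^ α / (t - σ)) • g σ

lemma continuousOn_fractionalContinuation {α a b : ℝ} {g : ℝ → E} (hα : 0 < α) (hab : a ≤ b)
    (hg : MemLp g ⊤ (volume.restrict (Ioo a b))) :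
    ContinuousOn (fractionalContinuation α a b g) (Ici b) := by
  refine ContinuousOn.const_smul (continuousOn_of_dominated
    (bound := fun σ ↦ (b - σ) ^ (α - 1) * (eLpNorm g ⊤ (volume.restrict (Ioo a b))).toReal)
    (fun t _ ↦ ?_) (fun t ht ↦ ?_) ?_ ?_) _
  · exact (Measurable.aestronglyMeasurable (by fun_prop)).smul hg.1
  · filter_upwards [ae_restrict_mem measurableSet_Ioo, hg.ae_norm_le_toReal_eLpNorm_top]
      with σ hσ hgσ
    have hbσ : 0 < b - σ := sub_pos.2 hσ.2
    have htσ : b - σ ≤ t - σ := by linarith [mem_Ici.1 ht]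
    rw [norm_smul, norm_div, norm_of_nonneg (by positivity), norm_of_nonneg (by linarith),
      rpow_sub_one hbσ.ne']
    gcongr
  · exact (integrableOn_Ioo_sub_rpow_right hab (by linarith)).mul_const _
  · filter_upwards [ae_restrict_mem measurableSet_Ioo] with σ hσ
    refine ContinuousOn.smul (continuousOn_const.div (by fun_prop) fun t ht ↦ ?_) continuousOn_const
    linarith [mem_Ici.1 ht, hσ.2]

lemma integrable_rpow_mul_rpow_div_smul_prod {α a b t : ℝ} {g : ℝ → E} (h0 : 0 < α) (h1 : α < 1)
    (hab : a ≤ b) (hbt : b < t) (hg : MemLp g ⊤ (volume.restrict (Ioo a b))) :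
    Integrable (Function.uncurry fun τ σ ↦
        ((t - τ) ^ (α - 1) * (τ - b) ^ (-α) * ((b - σ) ^ α / (τ - σ))) • g σ)
      ((volume.restrict (Ioo b t)).prod (volume.restrict (Ioo a b))) := by
  set M := (eLpNorm g ⊤ (volume.restrict (Ioo a b))).toReal
  have hdom : Integrable (fun z : ℝ × ℝ ↦
      (t - z.1) ^ (α - 1) * (z.1 - b) ^ (-α) * ((b - z.2) ^ (α - 1) * M))
      ((volume.restrict (Ioo b t)).prod (volume.restrict (Ioo a b))) :=
    (integrableOn_Ioo_sub_rpow_mul_sub_rpow hbt (by linarith) (by linarith)).mul_prod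
      ((integrableOn_Ioo_sub_rpow_right hab (by linarith)).mul_const M)
  refine hdom.mono' ?_ ?_
  · exact (Measurable.aestronglyMeasurable (by fun_prop)).smul hg.1.comp_snd
  have hfst : ∀ᵐ z ∂((volume.restrict (Ioo b t)).prod (volume.restrict (Ioo a b))),
      z.1 ∈ Ioo b t :=
    Measure.quasiMeasurePreserving_fst.ae (ae_restrict_mem measurableSet_Ioo)
  have hsnd : ∀ᵐ z ∂((volume.restrict (Ioo b t)).prod (volume.restrict (Ioo a b))),
      z.2 ∈ Ioo a b ∧ ‖g z.2‖ ≤ M :=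
    Measure.quasiMeasurePreserving_snd.ae
      ((ae_restrict_mem measurableSet_Ioo).and hg.ae_norm_le_toReal_eLpNorm_top)
  filter_upwards [hfst, hsnd] with ⟨τ, σ⟩ ⟨hbτ, hτt⟩ ⟨⟨_, hσb⟩, hgσ⟩
  simp only [Function.uncurry_apply_pair]
  have hbσ : 0 < b - σ := sub_pos.2 hσb
  have hτσ : b - σ ≤ τ - σ := by linarith
  have := sub_pos.2 hbτ
  have := sub_pos.2 hτt
  rw [norm_smul, norm_mul, norm_div, norm_of_nonneg (by positivity), norm_of_nonneg (by positivity),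
    norm_of_nonneg (by linarith), rpow_sub_one hbσ.ne', mul_assoc (_ * _)]
  gcongr

variable [CompleteSpace E]

theorem integral_rpow_smul_eq_integral_fractionalContinuation {α a b t : ℝ} {g : ℝ → E}
    (h0 : 0 < α) (h1 : α < 1) (hab : a ≤ b) (hbt : b < t)
    (hg : MemLp g ⊤ (volume.restrict (Ioo a b))) :
    ∫ σ in Ioo a b, (t - σ) ^ (α - 1) • g σ =
      ∫ τ in Ioo b t, ((t - τ) ^ (α - 1) * (τ - b) ^ (-α)) • fractionalContinuation α a b g τ := by
  have hsin : sin (α * π) ≠ 0 := (sin_pos_of_pos_of_lt_pi (by positivity)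
    (by nlinarith [pi_pos])).ne'
  have hinner : ∀ σ ∈ Ioo a b, ∫ τ in Ioo b t,
      (t - τ) ^ (α - 1) * (τ - b) ^ (-α) * ((b - σ) ^ α / (τ - σ)) =
        π / sin (α * π) * (t - σ) ^ (α - 1) := by
    intro σ hσ
    have hbσ : 0 < b - σ := sub_pos.2 hσ.2
    simp_rw [div_eq_mul_inv ((b - σ) ^ α), ← mul_assoc, mul_right_comm _ ((b - σ) ^ α)]
    rw [integral_mul_const, integral_Ioo_sub_rpow_mul_sub_rpow_mul_inv_sub h0 h1 hσ.2 hbt,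
      mul_comm π α, mul_assoc, ← rpow_add hbσ, neg_add_cancel, rpow_zero, mul_one]
  calc ∫ σ in Ioo a b, (t - σ) ^ (α - 1) • g σ
      = (sin (α * π) / π) • ∫ σ in Ioo a b, (π / sin (α * π) * (t - σ) ^ (α - 1)) • g σ := by
        simp_rw [← integral_smul, smul_smul, ← mul_assoc, div_mul_div_cancel₀ pi_ne_zero,
          div_self hsin, one_mul]
    _ = (sin (α * π) / π) • ∫ σ in Ioo a b, ∫ τ in Ioo b t,
          ((t - τ) ^ (α - 1) * (τ - b) ^ (-α) * ((b - σ) ^ α / (τ - σ))) • g σ := by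
        congr 1
        refine setIntegral_congr_fun measurableSet_Ioo fun σ hσ ↦ ?_
        rw [integral_smul_const, hinner σ hσ]
    _ = (sin (α * π) / π) • ∫ τ in Ioo b t, ∫ σ in Ioo a b,
          ((t - τ) ^ (α - 1) * (τ - b) ^ (-α) * ((b - σ) ^ α / (τ - σ))) • g σ := by
        rw [integral_integral_swap (integrable_rpow_mul_rpow_div_smul_prod h0 h1 hab hbt hg)]
    _ = _ := by
        simp_rw [fractionalContinuation, ← integral_smul, smul_comm _ (sin (α * π) / π), smul_smul]

theorem continuation_lemma_identity_general
    (n : ℕ) (α t₀ tst θ : ℝ) (hα : α ∈ Set.Ioo (0 : ℝ) 1)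
    (h₁ : t₀ < tst)
    (φ : ℝ → EuclideanSpace ℝ (Fin n)) (hφm : Measurable φ)
    (hφb : eLpNorm φ ⊤ (volume.restrict (Set.Icc t₀ tst)) < ⊤)
    (ψ : ℝ → EuclideanSpace ℝ (Fin n))
    (hψ : ∀ t ∈ Set.Icc tst θ,
      ψ t = (Real.sin (α * π) / π) •
        ∫ τ in t₀..tst, ((tst - τ) ^ α / (t - τ)) • φ τ) :
    ContinuousOn ψ (Set.Icc tst θ) ∧
    ∀ t ∈ Set.Ioc tst θ,
      (∫ τ in t₀..tst, ((t - τ) ^ (α - 1)) • φ τ)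
        = ∫ τ in tst..t, ((t - τ) ^ (α - 1) * (τ - tst) ^ (-α)) • ψ τ := by
  obtain ⟨h0, h1⟩ := hα
  have hφ : MemLp φ ⊤ (volume.restrict (Ioo t₀ tst)) :=
    MemLp.mono_measure (Measure.restrict_mono Ioo_subset_Icc_self le_rfl)
      ⟨hφm.aestronglyMeasurable, hφb⟩
  have hψ_eq : EqOn ψ (fractionalContinuation α t₀ tst φ) (Icc tst θ) := fun t ht ↦ by
    rw [hψ t ht, intervalIntegral.integral_of_le h₁.le, integral_Ioc_eq_integral_Ioo]
    rfl
  refine ⟨((continuousOn_fractionalContinuation h0 h₁.le hφ).mono Icc_subset_Ici_self).congr hψ_eq,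
    fun t ht ↦ ?_⟩
  rw [intervalIntegral.integral_of_le h₁.le, intervalIntegral.integral_of_le ht.1.le,
    integral_Ioc_eq_integral_Ioo, integral_Ioc_eq_integral_Ioo,
    integral_rpow_smul_eq_integral_fractionalContinuation h0 h1 h₁.le ht.1 hφ]
  refine setIntegral_congr_fun measurableSet_Ioo fun τ hτ ↦ ?_
  rw [hψ_eq ⟨hτ.1.le, hτ.2.le.trans ht.2⟩]

/-- For `φ ∈ L^∞([t₀,t*],ℝⁿ)` and
`ψ(t) = (sin(απ)/π) ∫_{t₀}^{t*} (t*-τ)^α (t-τ)⁻¹ φ(τ) dτ`, the function `ψ` is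
continuous on `[t*,θ]`, and for every `t ∈ (t*,θ]`,
`∫_{t₀}^{t*} (t-τ)^{α-1} φ(τ) dτ = ∫_{t*}^{t} (t-τ)^{α-1}(τ-t*)^{-α} ψ(τ) dτ`. -/
theorem continuation_lemma_identity
    (n : ℕ) (α t₀ tst θ : ℝ) (hα : α ∈ Set.Ioo (0 : ℝ) 1)
    (h₁ : t₀ < tst) (h₂ : tst < θ)
    (φ : ℝ → EuclideanSpace ℝ (Fin n)) (hφm : Measurable φ)
    (hφb : eLpNorm φ ⊤ (volume.restrict (Set.Icc t₀ tst)) < ⊤)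
    (ψ : ℝ → EuclideanSpace ℝ (Fin n))
    (hψ : ∀ t ∈ Set.Icc tst θ,
      ψ t = (Real.sin (α * π) / π) •
        ∫ τ in t₀..tst, ((tst - τ) ^ α / (t - τ)) • φ τ) :
    ContinuousOn ψ (Set.Icc tst θ) ∧
    ∀ t ∈ Set.Ioc tst θ,
      (∫ τ in t₀..tst, ((t - τ) ^ (α - 1)) • φ τ)
        = ∫ τ in tst..t, ((t - τ) ^ (α - 1) * (τ - tst) ^ (-α)) • ψ τ :=
  continuation_lemma_identity_general n α t₀ tst θ hα h₁ φ hφm hφb ψ hψ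
end

section
/- Let α ∈ (0,1), t₀ < t* < θ, and w* ∈ AC^α([t₀,t*], ℝⁿ), i.e., w*(t) = w*(t₀) + (1/Γ(α)) ∫_{t₀}^t φ*(τ)/(t−τ)^{1−α} dτ for some φ* ∈ L^∞([t₀,t*], ℝⁿ). Define b*(t) = (α/Γ(1−α)) ∫_{t₀}^{t*} (w*(τ)−w*(t₀))/(t−τ)^{1+α} dτ − (w*(t*)−w*(t₀))/(Γ(1−α)(t−t*)^α) for t ∈ (t*,θ], and ψ*(t) = (sin(απ)/π) ∫_{t₀}^{t*} (t*−τ)^α φ*(τ)/(t−τ) dτ for t ∈ [t*,θ]. Then ψ*(t*) = (w*(t*) − w*(t₀))/Γ(1−α), and b*(t) = (ψ*(t) − ψ*(t*))/(t−t*)^α for all t ∈ (t*,θ]. -/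
/-!
Substituting `w*(τ) - w*(t₀) = I^α φ*(τ)` into the integral defining `b*` and exchanging the order
of integration over the triangle `t₀ < s < τ < t*` (Dirichlet's formula) leaves, against `φ*(s)`,
the elementary integral `∫_s^{t*} (t-τ)^{-1-α} (τ-s)^{α-1} dτ = (t*-s)^α (t-t*)^{-α} / (α (t-s))`,
whose antiderivative is `(τ-s)^α (t-τ)^{-α} / (α (t-s))`. The factors `Γ(α)` and `sin(απ)/π` then
combine through the reflection formula `Γ(α) Γ(1-α) = π / sin(απ)`; at `t = t*` the kernel of `ψ*`
is `(t*-τ)^{α-1}`, so `ψ*(t*)` is the same reflection formula applied to `I^α φ*(t*)`.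
-/

open MeasureTheory Set Real

section BetaIntegral

variable {α s t : ℝ}

lemma hasDerivAt_sub_rpow_mul_sub_rpow_neg {τ : ℝ} (hsτ : s < τ) (hτt : τ < t) :
    HasDerivAt (fun x => (x - s) ^ α * (t - x) ^ (-α))
      (α * (t - s) * ((t - τ) ^ (-(1 + α)) * (τ - s) ^ (α - 1))) τ := by
  have hτs : 0 < τ - s := sub_pos.2 hsτ
  have htτ : 0 < t - τ := sub_pos.2 hτt
  refine ((((hasDerivAt_id τ).sub_const s).rpow_const (p := α) (Or.inl hτs.ne')).mul
    (((hasDerivAt_id τ).const_sub t).rpow_const (p := -α) (Or.inl htτ.ne'))).congr_deriv ?_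
  simp only [id]
  rw [show -α - 1 = -(1 + α) by ring, show (t - τ) ^ (-α) = (t - τ) ^ (-(1 + α)) * (t - τ) by
      rw [← rpow_add_one htτ.ne']; ring_nf,
    show (τ - s) ^ α = (τ - s) ^ (α - 1) * (τ - s) by
      rw [rpow_sub_one hτs.ne', div_mul_cancel₀ _ hτs.ne']]
  ring

lemma integral_sub_rpow_mul_sub_rpow {b : ℝ} (hα : 0 < α) (hsb : s ≤ b) (hbt : b < t) :
    ∫ τ in s..b, (t - τ) ^ (-(1 + α)) * (τ - s) ^ (α - 1) =
      (α * (t - s))⁻¹ * ((b - s) ^ α * (t - b) ^ (-α)) := by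
  have hts : 0 < t - s := by linarith
  have hcont : ContinuousOn (fun x => (α * (t - s))⁻¹ * ((x - s) ^ α * (t - x) ^ (-α)))
      (Icc s b) := by
    refine continuousOn_const.mul (ContinuousOn.mul ?_ ?_)
    · exact (continuous_id.sub continuous_const).rpow_const (fun _ => Or.inr hα.le) |>.continuousOn
    · exact ContinuousOn.rpow_const (by fun_prop) fun x hx => Or.inl (by linarith [hx.2])
  have hderiv : ∀ x ∈ Ioo s b, HasDerivWithinAt
      (fun x => (α * (t - s))⁻¹ * ((x - s) ^ α * (t - x) ^ (-α)))
      ((t - x) ^ (-(1 + α)) * (x - s) ^ (α - 1)) (Ioi x) x := fun x hx => by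
    have h := ((hasDerivAt_sub_rpow_mul_sub_rpow_neg (α := α) hx.1 (hx.2.trans hbt)).const_mul
      (α * (t - s))⁻¹).hasDerivWithinAt (s := Ioi x)
    rwa [← mul_assoc, inv_mul_cancel₀ (by positivity), one_mul] at h
  have hint :
      IntervalIntegrable (fun τ => (t - τ) ^ (-(1 + α)) * (τ - s) ^ (α - 1)) volume s b := by
    have hsing : IntervalIntegrable (fun τ => (τ - s) ^ (α - 1)) volume s b := by
      simpa using (intervalIntegral.intervalIntegrable_rpow' (a := 0) (b := b - s)
        (by linarith : -1 < α - 1)).comp_sub_right s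
    refine hsing.continuousOn_mul (ContinuousOn.rpow_const (by fun_prop) fun x hx => Or.inl ?_)
    rw [uIcc_of_le hsb] at hx
    linarith [hx.2]
  rw [intervalIntegral.integral_eq_sub_of_hasDeriv_right_of_le hsb hcont hderiv hint]
  simp [zero_rpow hα.ne']

end BetaIntegral

section Dirichlet

variable {E : Type*} [NormedAddCommGroup E] [NormedSpace ℝ E] {a b : ℝ}

lemma intervalIntegral_integral_swap_of_integrable_triangle {F : ℝ → ℝ → E} (hab : a ≤ b)
    (hF : Integrable ({p : ℝ × ℝ | p.2 < p.1}.indicator (Function.uncurry F))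
      ((volume.restrict (Ioc a b)).prod (volume.restrict (Ioc a b)))) :
    ∫ τ in a..b, ∫ s in a..τ, F τ s = ∫ s in a..b, ∫ τ in s..b, F τ s := by
  set f : ℝ → ℝ → E := fun τ s => {p : ℝ × ℝ | p.2 < p.1}.indicator (Function.uncurry F) (τ, s)
  have hinner : ∀ τ ∈ Ioc a b, ∫ s in Ioc a b, f τ s = ∫ s in a..τ, F τ s := fun τ hτ => by
    have hsection : f τ = (Iio τ).indicator (F τ) := by
      ext s; simp [f, indicator_apply]
    rw [hsection, integral_indicator measurableSet_Iio, Measure.restrict_restrict measurableSet_Iio,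
      show Iio τ ∩ Ioc a b = Ioo a τ by
        ext; simp only [mem_inter_iff, mem_Iio, mem_Ioc, mem_Ioo]; grind,
      intervalIntegral.integral_of_le hτ.1.le, integral_Ioc_eq_integral_Ioo]
  have houter : ∀ s ∈ Ioc a b, ∫ τ in Ioc a b, f τ s = ∫ τ in s..b, F τ s := fun s hs => by
    have hsection : (fun τ => f τ s) = (Ioi s).indicator (fun τ => F τ s) := by
      ext τ; simp [f, indicator_apply]
    rw [hsection, integral_indicator measurableSet_Ioi, Measure.restrict_restrict measurableSet_Ioi,
      show Ioi s ∩ Ioc a b = Ioc s b by ext; simp only [mem_inter_iff, mem_Ioi, mem_Ioc]; grind,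
      intervalIntegral.integral_of_le hs.2]
  calc ∫ τ in a..b, ∫ s in a..τ, F τ s
      = ∫ τ in Ioc a b, ∫ s in Ioc a b, f τ s := by
        rw [intervalIntegral.integral_of_le hab]
        exact setIntegral_congr_fun measurableSet_Ioc fun τ hτ => (hinner τ hτ).symm
    _ = ∫ s in Ioc a b, ∫ τ in Ioc a b, f τ s := integral_integral_swap hF
    _ = ∫ s in a..b, ∫ τ in s..b, F τ s := by
        rw [intervalIntegral.integral_of_le hab]
        exact setIntegral_congr_fun measurableSet_Ioc houter

lemma integrable_indicator_rpow_kernel {α : ℝ} (hα : 0 < α) {g : ℝ → ℝ}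
    (hg : ContinuousOn g (Icc a b)) {φ : ℝ → E} (hφ : IntegrableOn φ (Ioc a b)) :
    Integrable ({p : ℝ × ℝ | p.2 < p.1}.indicator
        fun p => (g p.1 * (p.1 - p.2) ^ (α - 1)) • φ p.2)
      ((volume.restrict (Ioc a b)).prod (volume.restrict (Ioc a b))) := by
  obtain ⟨G, hG⟩ := isCompact_Icc.exists_bound_of_continuousOn hg
  -- On the square the integrand is dominated by the convolution integrand `G k(τ - s) ‖φ s‖`.
  set k : ℝ → ℝ := (Ioc 0 (b - a)).indicator fun x => x ^ (α - 1)
  have hk : Integrable k := (integrable_indicator_iff measurableSet_Ioc).2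
    (intervalIntegral.intervalIntegrable_rpow' (by linarith)).1
  have hdom : Integrable (fun p : ℝ × ℝ => G * ‖k (p.1 - p.2) • φ p.2‖)
      ((volume.restrict (Ioc a b)).prod (volume.restrict (Ioc a b))) :=
    (((hφ.convolution_integrand ((ContinuousLinearMap.lsmul ℝ ℝ).flip) hk).mono_measure
      (Measure.prod_mono Measure.restrict_le_self le_rfl)).norm.const_mul G)
  refine hdom.mono' ?_ ?_
  · refine AEStronglyMeasurable.indicator ?_ (measurableSet_lt measurable_snd measurable_fst)
    refine (AEStronglyMeasurable.mul ?_ ?_).smul hφ.aestronglyMeasurable.comp_snd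
    · exact ((hg.aestronglyMeasurable measurableSet_Icc).mono_measure
        (Measure.restrict_mono Ioc_subset_Icc_self le_rfl)).comp_fst
    · exact (by fun_prop : Measurable fun p : ℝ × ℝ => (p.1 - p.2) ^ (α - 1)).aestronglyMeasurable
  · rw [Measure.prod_restrict]
    filter_upwards [ae_restrict_mem (measurableSet_Ioc.prod measurableSet_Ioc)] with p hp
    obtain ⟨⟨hτa, hτb⟩, hsa, hsb⟩ := hp
    by_cases hsτ : p.2 < p.1
    · have hkp : k (p.1 - p.2) = (p.1 - p.2) ^ (α - 1) :=
        indicator_of_mem (show p.1 - p.2 ∈ Ioc 0 (b - a) from ⟨sub_pos.2 hsτ, by linarith⟩) _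
      rw [indicator_of_mem (s := {p : ℝ × ℝ | p.2 < p.1}) hsτ, hkp, norm_smul, norm_smul, norm_mul,
        ← mul_assoc]
      gcongr
      exact hG _ ⟨hτa.le, hτb⟩
    · rw [indicator_of_notMem (s := {p : ℝ × ℝ | p.2 < p.1}) hsτ, norm_zero]
      exact mul_nonneg ((norm_nonneg _).trans (hG _ ⟨hτa.le, hτb⟩)) (norm_nonneg _)

lemma intervalIntegral_smul_integral_rpow_sub_smul_swap [CompleteSpace E] {α : ℝ} (hα : 0 < α)
    (hab : a ≤ b) {g : ℝ → ℝ} (hg : ContinuousOn g (Icc a b)) {φ : ℝ → E}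
    (hφ : IntegrableOn φ (Ioc a b)) :
    ∫ τ in a..b, g τ • ∫ s in a..τ, (τ - s) ^ (α - 1) • φ s =
      ∫ s in a..b, (∫ τ in s..b, g τ * (τ - s) ^ (α - 1)) • φ s := by
  have h := intervalIntegral_integral_swap_of_integrable_triangle
    (F := fun τ s => (g τ * (τ - s) ^ (α - 1)) • φ s) hab
    (integrable_indicator_rpow_kernel hα hg hφ)
  simpa only [← intervalIntegral.integral_smul_const, ← intervalIntegral.integral_smul, smul_smul]
    using h

lemma intervalIntegral_sub_rpow_smul_integral_rpow_sub_smul [CompleteSpace E] {α t : ℝ}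
    (hα : 0 < α) (hab : a ≤ b) (hbt : b < t) {φ : ℝ → E} (hφ : IntegrableOn φ (Ioc a b)) :
    ∫ τ in a..b, (t - τ) ^ (-(1 + α)) • ∫ s in a..τ, (τ - s) ^ (α - 1) • φ s =
      ((t - b) ^ (-α) / α) • ∫ s in a..b, ((b - s) ^ α / (t - s)) • φ s := by
  have hg : ContinuousOn (fun τ => (t - τ) ^ (-(1 + α))) (Icc a b) :=
    ContinuousOn.rpow_const (by fun_prop) fun τ hτ => Or.inl (by linarith [hτ.2])
  rw [intervalIntegral_smul_integral_rpow_sub_smul_swap hα hab hg hφ,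
    ← intervalIntegral.integral_smul]
  refine intervalIntegral.integral_congr fun s hs => ?_
  rw [uIcc_of_le hab] at hs
  have hts : t - s ≠ 0 := by linarith [hs.2]
  rw [integral_sub_rpow_mul_sub_rpow hα hs.2 hbt, smul_smul]
  congr 1
  field_simp

end Dirichlet

lemma sin_mul_pi_div_pi_eq_inv_Gamma_mul_Gamma_one_sub (α : ℝ) :
    sin (α * π) / π = (Gamma α * Gamma (1 - α))⁻¹ := by
  rw [Gamma_mul_Gamma_one_sub, inv_div, mul_comm]

/-- For `w*` fractionally absolutely continuous on `[t₀,t*]` with density `φ*`,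
`ψ*(t) = (sin(απ)/π) ∫_{t₀}^{t*} (t*-τ)^α (t-τ)⁻¹ φ*(τ) dτ` satisfies
`ψ*(t*) = (w*(t*) − w*(t₀))/Γ(1−α)`, and the auxiliary inhomogeneity
`b*(t) = (α/Γ(1−α)) ∫_{t₀}^{t*} (t-τ)^{-1-α}(w*(τ)−w*(t₀)) dτ
  − (w*(t*)−w*(t₀))/(Γ(1−α)(t−t*)^α)` equals `(ψ*(t) − ψ*(t*))/(t−t*)^α` on `(t*,θ]`. -/
theorem auxiliary_inhomogeneity_identity
    (n : ℕ) (α t₀ tst θ : ℝ) (hα : α ∈ Set.Ioo (0 : ℝ) 1)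
    (h₁ : t₀ < tst) (h₂ : tst < θ)
    (w : ℝ → EuclideanSpace ℝ (Fin n))
    (φ : ℝ → EuclideanSpace ℝ (Fin n)) (hφm : Measurable φ)
    (hφb : eLpNorm φ ⊤ (volume.restrict (Set.Icc t₀ tst)) < ⊤)
    (hw : ∀ t ∈ Set.Icc t₀ tst,
      w t = w t₀ + (Real.Gamma α)⁻¹ • ∫ τ in t₀..t, ((t - τ) ^ (α - 1)) • φ τ)
    (ψ : ℝ → EuclideanSpace ℝ (Fin n))
    (hψ : ∀ t ∈ Set.Icc tst θ,
      ψ t = (Real.sin (α * π) / π) •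
        ∫ τ in t₀..tst, ((tst - τ) ^ α / (t - τ)) • φ τ)
    (bst : ℝ → EuclideanSpace ℝ (Fin n))
    (hbst : ∀ t ∈ Set.Ioc tst θ,
      bst t = (α / Real.Gamma (1 - α)) •
          (∫ τ in t₀..tst, ((t - τ) ^ (-(1 + α))) • (w τ - w t₀))
        - (Real.Gamma (1 - α) * (t - tst) ^ α)⁻¹ • (w tst - w t₀)) :
    ψ tst = (Real.Gamma (1 - α))⁻¹ • (w tst - w t₀) ∧
    ∀ t ∈ Set.Ioc tst θ, bst t = ((t - tst) ^ α)⁻¹ • (ψ t - ψ tst) := by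
  obtain ⟨hα0, hα1⟩ := hα
  have hincr : ∀ τ ∈ Icc t₀ tst,
      w τ - w t₀ = (Gamma α)⁻¹ • ∫ s in t₀..τ, (τ - s) ^ (α - 1) • φ s := fun τ hτ =>
    sub_eq_of_eq_add' (hw τ hτ)
  have hψst : ψ tst = (Gamma (1 - α))⁻¹ • (w tst - w t₀) := by
    have hkernel : ∀ τ ∈ uIcc t₀ tst,
        ((tst - τ) ^ α / (tst - τ)) • φ τ = (tst - τ) ^ (α - 1) • φ τ := fun τ hτ => by
      rw [uIcc_of_le h₁.le] at hτ
      rw [rpow_sub_one' (sub_nonneg.2 hτ.2) (by linarith)]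
    rw [hψ tst ⟨le_rfl, h₂.le⟩, intervalIntegral.integral_congr hkernel,
      hincr tst ⟨h₁.le, le_rfl⟩, smul_smul, sin_mul_pi_div_pi_eq_inv_Gamma_mul_Gamma_one_sub]
    field_simp
  refine ⟨hψst, fun t ht => ?_⟩
  have hφLp : MemLp φ ⊤ (volume.restrict (Icc t₀ tst)) := ⟨hφm.aestronglyMeasurable, hφb⟩
  have hφi : IntegrableOn φ (Ioc t₀ tst) :=
    IntegrableOn.mono_set (hφLp.integrable le_top) Ioc_subset_Icc_self
  have hdirichlet : ∫ τ in t₀..tst, (t - τ) ^ (-(1 + α)) • (w τ - w t₀) =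
      ((Gamma α)⁻¹ * ((t - tst) ^ (-α) / α)) •
        ∫ s in t₀..tst, ((tst - s) ^ α / (t - s)) • φ s := by
    rw [intervalIntegral.integral_congr fun τ hτ => by
        rw [hincr τ (uIcc_of_le h₁.le ▸ hτ), smul_comm],
      intervalIntegral.integral_smul,
      intervalIntegral_sub_rpow_smul_integral_rpow_sub_smul hα0 h₁.le ht.1 hφi, smul_smul]
  rw [hbst t ht, hdirichlet, hψ t ⟨ht.1.le, ht.2⟩, hψst,
    sin_mul_pi_div_pi_eq_inv_Gamma_mul_Gamma_one_sub, rpow_neg (sub_pos.2 ht.1).le]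
  match_scalars <;> field_simp
end
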